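/- arXiv:1905.09233 — 9 statements merged into one kernel-verified Lean document; each statement's English description precedes it below -/
import Mathlib

section
/- Let R be a local domain with maximal ideal m whose residue field has characteristic different from 2, let K = Frac(R), and let ρ : G → GL₂(K) be a representation of a group G with tr ρ(G) ⊆ R. Suppose there exists g₀ ∈ G such that the characteristic polynomial of ρ(g₀) has two roots λ₁, λ₂ ∈ R with λ₁ ≢ λ₂ (mod m). Then, choosing a basis diagonalizing ρ(g₀) and writing ρ(g) = (a(g), b(g); c(g), d(g)), the entries a(g) and d(g) lie in R for all g ∈ G. -/
/-- Let `R` be a local domain with maximal ideal `m` whose residue field has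
characteristic different from `2` (equivalently `2 ∉ m`), `K = Frac(R)`, and
`ρ : G → GL₂(K)` a representation with all traces in `R`.  Suppose `g₀ ∈ G` is such that
`ρ g₀` is diagonal (in a chosen basis) with eigenvalues `λ₁, λ₂ ∈ R` distinct modulo `m`.
Then the diagonal matrix entries `a g = (ρ g) 0 0` and `d g = (ρ g) 1 1` lie in `R`
for every `g ∈ G`. -/
theorem stmt0 {R : Type*} [CommRing R] [IsDomain R] [IsLocalRing R]
    (hchar : (2 : R) ∉ IsLocalRing.maximalIdeal R)
    {K : Type*} [Field K] [Algebra R K] [IsFractionRing R K]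
    {G : Type*} [Group G] (ρ : G →* Matrix.GeneralLinearGroup (Fin 2) K)
    (htr : ∀ g : G, Matrix.trace ((ρ g : Matrix (Fin 2) (Fin 2) K)) ∈ (algebraMap R K).range)
    (g₀ : G) (lam₁ lam₂ : R)
    (hdiag : (ρ g₀ : Matrix (Fin 2) (Fin 2) K)
      = Matrix.diagonal ![algebraMap R K lam₁, algebraMap R K lam₂])
    (hdist : lam₁ - lam₂ ∉ IsLocalRing.maximalIdeal R) :
    ∀ g : G, (ρ g : Matrix (Fin 2) (Fin 2) K) 0 0 ∈ (algebraMap R K).range ∧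
      (ρ g : Matrix (Fin 2) (Fin 2) K) 1 1 ∈ (algebraMap R K).range := by
  intro g
  obtain ⟨t, ht⟩ := htr g
  obtain ⟨s, hs⟩ := htr (g₀ * g)
  have hu : IsUnit (lam₁ - lam₂) := by
    by_contra h
    exact hdist ((IsLocalRing.mem_maximalIdeal _).mpr h)
  obtain ⟨u, hu⟩ := hu
  have hmul : (ρ (g₀ * g) : Matrix (Fin 2) (Fin 2) K)
      = (ρ g₀ : Matrix (Fin 2) (Fin 2) K) * (ρ g : Matrix (Fin 2) (Fin 2) K) := by
    rw [map_mul]; rfl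
  have ht' : (ρ g : Matrix (Fin 2) (Fin 2) K) 0 0 + (ρ g : Matrix (Fin 2) (Fin 2) K) 1 1
      = algebraMap R K t := by
    rw [ht]; simp [Matrix.trace, Fin.sum_univ_two, Matrix.diag]
  have hs' : algebraMap R K lam₁ * (ρ g : Matrix (Fin 2) (Fin 2) K) 0 0
      + algebraMap R K lam₂ * (ρ g : Matrix (Fin 2) (Fin 2) K) 1 1 = algebraMap R K s := by
    rw [hs, hmul, hdiag]
    simp [Matrix.trace, Matrix.mul_apply, Fin.sum_univ_two, Matrix.diag, Matrix.diagonal]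
  have hinvR : (lam₁ - lam₂) * (↑u⁻¹ : R) = 1 := by
    rw [← hu]; exact u.mul_inv
  have hinvK : (algebraMap R K lam₁ - algebraMap R K lam₂) * algebraMap R K (↑u⁻¹ : R) = 1 := by
    rw [← map_sub, ← map_mul, hinvR, map_one]
  constructor
  · refine ⟨(↑u⁻¹ : R) * (s - lam₂ * t), ?_⟩
    rw [map_mul, map_sub, map_mul]
    linear_combination -(algebraMap R K (↑u⁻¹ : R)) * hs'
      + (algebraMap R K (↑u⁻¹ : R)) * (algebraMap R K lam₂) * ht'
      + ((ρ g : Matrix (Fin 2) (Fin 2) K) 0 0) * hinvK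
  · refine ⟨(↑u⁻¹ : R) * (lam₁ * t - s), ?_⟩
    rw [map_mul, map_sub, map_mul]
    linear_combination -(algebraMap R K (↑u⁻¹ : R)) * (algebraMap R K lam₁) * ht'
      + (algebraMap R K (↑u⁻¹ : R)) * hs'
      + ((ρ g : Matrix (Fin 2) (Fin 2) K) 1 1) * hinvK
end

section
/- With notation as above (ρ : G → GL₂(K), g₀ with mod-m-distinct eigenvalues, entries a, b, c, d relative to an eigenbasis of ρ(g₀)), the products b(g)·c(g′) lie in R for all g, g′ ∈ G. -/
/-- Let `R` be a local domain with maximal ideal `m` whose residue field has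
characteristic different from `2` (equivalently `2 ∉ m`), `K = Frac(R)`, and
`ρ : G → GL₂(K)` a representation with all traces in `R`.  Suppose `g₀ ∈ G` is such that
`ρ g₀` is diagonal (in a chosen basis) with eigenvalues `λ₁, λ₂ ∈ R` distinct modulo `m`.
Then the products of off-diagonal entries `b(g)·c(g′) = (ρ g) 0 1 * (ρ g′) 1 0` lie in `R`
for all `g, g′ ∈ G`. -/
theorem stmt1 {R : Type*} [CommRing R] [IsDomain R] [IsLocalRing R]
    (hchar : (2 : R) ∉ IsLocalRing.maximalIdeal R)
    {K : Type*} [Field K] [Algebra R K] [IsFractionRing R K]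
    {G : Type*} [Group G] (ρ : G →* Matrix.GeneralLinearGroup (Fin 2) K)
    (htr : ∀ g : G, Matrix.trace ((ρ g : Matrix (Fin 2) (Fin 2) K)) ∈ (algebraMap R K).range)
    (g₀ : G) (lam₁ lam₂ : R)
    (hdiag : (ρ g₀ : Matrix (Fin 2) (Fin 2) K)
      = Matrix.diagonal ![algebraMap R K lam₁, algebraMap R K lam₂])
    (hdist : lam₁ - lam₂ ∉ IsLocalRing.maximalIdeal R) :
    ∀ g g' : G, (ρ g : Matrix (Fin 2) (Fin 2) K) 0 1 * (ρ g' : Matrix (Fin 2) (Fin 2) K) 1 0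
      ∈ (algebraMap R K).range := by
  -- `lam₁ - lam₂` is a unit
  have hunit : IsUnit (lam₁ - lam₂) := by
    by_contra h
    exact hdist (IsLocalRing.mem_maximalIdeal _ |>.mpr h)
  obtain ⟨u, hu⟩ := hunit
  -- all diagonal entries `a(g)` lie in `R`
  have ha : ∀ g : G, (ρ g : Matrix (Fin 2) (Fin 2) K) 0 0 ∈ (algebraMap R K).range := by
    intro g
    obtain ⟨t, ht⟩ := htr g
    obtain ⟨s, hs⟩ := htr (g₀ * g)
    rw [Matrix.trace_fin_two] at ht hs
    have hmul : (ρ (g₀ * g) : Matrix (Fin 2) (Fin 2) K)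
        = (ρ g₀ : Matrix (Fin 2) (Fin 2) K) * (ρ g : Matrix (Fin 2) (Fin 2) K) := by
      rw [map_mul]; rfl
    have h00 : (ρ (g₀ * g) : Matrix (Fin 2) (Fin 2) K) 0 0
        = algebraMap R K lam₁ * (ρ g : Matrix (Fin 2) (Fin 2) K) 0 0 := by
      rw [hmul, hdiag, Matrix.diagonal_mul]; simp
    have h11 : (ρ (g₀ * g) : Matrix (Fin 2) (Fin 2) K) 1 1
        = algebraMap R K lam₂ * (ρ g : Matrix (Fin 2) (Fin 2) K) 1 1 := by
      rw [hmul, hdiag, Matrix.diagonal_mul]; simp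
    rw [h00, h11] at hs
    refine ⟨↑u⁻¹ * (s - lam₂ * t), ?_⟩
    have hone : algebraMap R K ↑u⁻¹ * algebraMap R K (lam₁ - lam₂) = 1 := by
      rw [← map_mul, ← hu, Units.inv_mul, map_one]
    calc algebraMap R K (↑u⁻¹ * (s - lam₂ * t))
        = algebraMap R K ↑u⁻¹ * (algebraMap R K s - algebraMap R K lam₂ * algebraMap R K t) := by
          rw [map_mul, map_sub, map_mul]
      _ = algebraMap R K ↑u⁻¹ * (algebraMap R K (lam₁ - lam₂)
            * (ρ g : Matrix (Fin 2) (Fin 2) K) 0 0) := by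
          rw [map_sub]; rw [hs, ht]; ring
      _ = (ρ g : Matrix (Fin 2) (Fin 2) K) 0 0 := by
          rw [← mul_assoc, hone, one_mul]
  intro g g'
  obtain ⟨x, hx⟩ := ha (g * g')
  obtain ⟨y, hy⟩ := ha g
  obtain ⟨z, hz⟩ := ha g'
  have hmul : (ρ (g * g') : Matrix (Fin 2) (Fin 2) K) 0 0
      = (ρ g : Matrix (Fin 2) (Fin 2) K) 0 0 * (ρ g' : Matrix (Fin 2) (Fin 2) K) 0 0
        + (ρ g : Matrix (Fin 2) (Fin 2) K) 0 1 * (ρ g' : Matrix (Fin 2) (Fin 2) K) 1 0 := by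
    have : (ρ (g * g') : Matrix (Fin 2) (Fin 2) K)
        = (ρ g : Matrix (Fin 2) (Fin 2) K) * (ρ g' : Matrix (Fin 2) (Fin 2) K) := by
      rw [map_mul]; rfl
    rw [this, Matrix.mul_apply, Fin.sum_univ_two]
  refine ⟨x - y * z, ?_⟩
  rw [map_sub, map_mul, hx, hy, hz, hmul]
  ring
end

section
/- Let R be a local domain with maximal ideal m, residue characteristic ≠ 2, and ρ : G → GL₂(Frac R) with tr ρ(G) ⊆ R admitting g₀ ∈ G whose characteristic polynomial has roots in R distinct mod m. Then there exists a unique ideal I(ρ) of R such that for every ideal J of R: I(ρ) ⊆ J if and only if there exist characters ϑ₁, ϑ₂ : G → (R/J)× with tr ρ mod J = ϑ₁ + ϑ₂. -/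
/-!
In an eigenbasis of `ρ(g₀)` write `ρ(g) = [[a(g), b(g)], [c(g), d(g)]]`. Since
`tr ρ(g₀g) = λ₁ a(g) + λ₂ d(g)` and `λ₁ - λ₂` is a unit, `a` and `d` are `R`-valued functions of the
trace, and `a(gg') - a(g)a(g') = b(g)c(g')`, `d(gg') - d(g)d(g') = c(g)b(g')`. So `I(ρ)` is the ideal
generated by the multiplicativity defects of `a`, and modulo any `J ⊇ I(ρ)` both `a` and `d` are
characters with sum `tr ρ`. Conversely, if `tr ρ ≡ ϑ₁ + ϑ₂ mod J`, the first two power sums at `g₀`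
determine `{ϑ₁(g₀), ϑ₂(g₀)} = {λ₁, λ₂}` because `2` is invertible and `R ⧸ J` is local; the same
trace formula then identifies `a mod J` with one of the `ϑᵢ`, which kills the defects of `a`.
-/

theorem existsUnique_forall_le_iff {α : Type*} [PartialOrder α] {P : α → Prop} {a : α}
    (h : ∀ b, a ≤ b ↔ P b) : ∃! a : α, ∀ b, a ≤ b ↔ P b :=
  ⟨a, h, fun a' h' => le_antisymm ((h' a).2 ((h a).1 le_rfl)) ((h a').2 ((h' a').1 le_rfl))⟩

theorem exists_monoidHom_units_of_map_mul {G S : Type*} [Group G] [Monoid S] {f : G → S}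
    (one : f 1 = 1) (mul : ∀ g g', f (g * g') = f g * f g') :
    ∃ χ : G →* Sˣ, ∀ g, (χ g : S) = f g :=
  ⟨(MonoidHom.mk ⟨f, one⟩ mul).toHomUnits, fun _ => rfl⟩

theorem pair_eq_or_swap_of_add_eq_of_sq_add_sq_eq {S : Type*} [CommRing S] [IsLocalRing S]
    {x y a b : S} (h2 : IsUnit (2 : S)) (hab : IsUnit (a - b)) (h₁ : x + y = a + b)
    (h₂ : x ^ 2 + y ^ 2 = a ^ 2 + b ^ 2) : x = a ∧ y = b ∨ x = b ∧ y = a := by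
  have hxy : x * y = a * b :=
    h2.mul_left_cancel (by linear_combination (x + y + a + b) * h₁ - h₂)
  have hroots : (x - a) * (x - b) = 0 := by linear_combination x * h₁ - hxy
  have hsum : IsUnit ((x - b) + -(x - a)) := by
    convert hab using 1; ring
  rcases IsLocalRing.isUnit_or_isUnit_of_isUnit_add hsum with hu | hu
  · have hx : x = a := sub_eq_zero.mp (hu.mul_right_eq_zero.mp (by rwa [mul_comm]))
    exact .inl ⟨hx, by linear_combination h₁ - hx⟩
  · have hx : x = b := sub_eq_zero.mp ((IsUnit.neg_iff _).mp hu |>.mul_right_eq_zero.mp hroots)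
    exact .inr ⟨hx, by linear_combination h₁ - hx⟩

namespace Matrix

variable {K : Type*} [CommRing K]

theorem sub_mul_apply_zero_zero_eq_trace (l₁ l₂ : K) (M : Matrix (Fin 2) (Fin 2) K) :
    (l₁ - l₂) * M 0 0 = trace (diagonal ![l₁, l₂] * M) - l₂ * trace M := by
  simp only [trace_fin_two, diagonal_mul, cons_val_zero, cons_val_one, cons_val_fin_one]
  ring

theorem mul_apply_one_one_sub_mul (M N : Matrix (Fin 2) (Fin 2) K) :
    (M * N) 1 1 - M 1 1 * N 1 1 = (N * M) 0 0 - N 0 0 * M 0 0 := by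
  simp only [mul_apply, Fin.sum_univ_two]
  ring

end Matrix

section MulDefect

variable {G R S : Type*} [CommRing R] [CommRing S]

/-- If `g₀` acts diagonally by `(l₁, l₂)` in a representation with trace `t`, then
`t (g₀ * g) - l₂ * t g = (l₁ - l₂) * a(g)` with `a(g)` the upper-left entry of `g`.
`Ring.inverse` is `0` at non-units, so this is meaningful only when `l₁ - l₂` is a unit. -/
noncomputable def diagEntryOfTrace [Mul G] (t : G → R) (g₀ : G) (l₁ l₂ : R) (g : G) : R :=
  Ring.inverse (l₁ - l₂) * (t (g₀ * g) - l₂ * t g)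

theorem sub_mul_diagEntryOfTrace [Mul G] {t : G → R} {g₀ : G} {l₁ l₂ : R}
    (hl : IsUnit (l₁ - l₂)) (g : G) :
    (l₁ - l₂) * diagEntryOfTrace t g₀ l₁ l₂ g = t (g₀ * g) - l₂ * t g := by
  rw [diagEntryOfTrace, ← mul_assoc, Ring.mul_inverse_cancel _ hl, one_mul]

theorem map_diagEntryOfTrace_eq [Mul G] (f : R →+* S) {t : G → R} {g₀ g : G} {l₁ l₂ : R}
    (hl : IsUnit (l₁ - l₂)) {x : S} (hx : (f l₁ - f l₂) * x = f (t (g₀ * g)) - f l₂ * f (t g)) :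
    f (diagEntryOfTrace t g₀ l₁ l₂ g) = x := by
  have hfl : IsUnit (f l₁ - f l₂) := by simpa only [map_sub] using hl.map f
  refine hfl.mul_left_cancel ?_
  rw [hx, ← map_sub, ← map_mul, sub_mul_diagEntryOfTrace hl, map_sub, map_mul]

def mulDefect [Mul G] (a : G → R) (g g' : G) : R := a (g * g') - a g * a g'

theorem map_mulDefect [Mul G] (f : R →+* S) (a : G → R) (g g' : G) :
    f (mulDefect a g g') = mulDefect (f ∘ a) g g' := by
  simp only [mulDefect, map_sub, map_mul, Function.comp_apply]

/-- For `a = diagEntryOfTrace …` the defects are the products `b(g)c(g')`, so this is `I(ρ)`. -/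
def mulDefectIdeal [Mul G] (a : G → R) : Ideal R :=
  Ideal.span (Set.range fun p : G × G => mulDefect a p.1 p.2)

theorem mulDefectIdeal_le_iff [Mul G] {a : G → R} {J : Ideal R} :
    mulDefectIdeal a ≤ J ↔ ∀ g g',
      Ideal.Quotient.mk J (a (g * g')) = Ideal.Quotient.mk J (a g) * Ideal.Quotient.mk J (a g') := by
  simp only [mulDefectIdeal, Ideal.span_le, Set.range_subset_iff, Prod.forall, SetLike.mem_coe,
    mulDefect, ← map_mul, Ideal.Quotient.eq]

variable [Group G] {t α : G → R} {J : Ideal R}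

theorem exists_characters_of_mulDefectIdeal_le (hα : α 1 = 1) (hδ : t 1 - α 1 = 1)
    (hswap : ∀ g g', mulDefect (t - α) g g' = mulDefect α g' g) (hJ : mulDefectIdeal α ≤ J) :
    ∃ ϑ₁ ϑ₂ : G →* (R ⧸ J)ˣ,
      ∀ g, Ideal.Quotient.mk J (t g) = (ϑ₁ g : R ⧸ J) + (ϑ₂ g : R ⧸ J) := by
  have hJ' : mulDefectIdeal (t - α) ≤ J := by
    refine le_trans (Ideal.span_le.mpr ?_) hJ
    rintro _ ⟨⟨g, g'⟩, rfl⟩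
    exact Ideal.subset_span ⟨⟨g', g⟩, (hswap g g').symm⟩
  obtain ⟨ϑ₁, hϑ₁⟩ := exists_monoidHom_units_of_map_mul
    (f := fun g => Ideal.Quotient.mk J (α g)) (by rw [hα, map_one])
    (mulDefectIdeal_le_iff.mp hJ)
  obtain ⟨ϑ₂, hϑ₂⟩ := exists_monoidHom_units_of_map_mul
    (f := fun g => Ideal.Quotient.mk J ((t - α) g)) (by rw [Pi.sub_apply, hδ, map_one])
    (mulDefectIdeal_le_iff.mp hJ')
  refine ⟨ϑ₁, ϑ₂, fun g => ?_⟩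
  rw [hϑ₁, hϑ₂, ← map_add, Pi.sub_apply, add_sub_cancel]

theorem map_diagEntryOfTrace_eq_of_trace_eq_add (f : R →+* S) {g₀ : G} {l₁ l₂ : R}
    (hl : IsUnit (l₁ - l₂)) (χ₁ χ₂ : G →* Sˣ) (hsum : ∀ g, f (t g) = (χ₁ g : S) + (χ₂ g : S))
    (h₁ : (χ₁ g₀ : S) = f l₁) (h₂ : (χ₂ g₀ : S) = f l₂) (g : G) :
    f (diagEntryOfTrace t g₀ l₁ l₂ g) = χ₁ g :=
  map_diagEntryOfTrace_eq f hl (by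
    rw [hsum, hsum, map_mul, map_mul, Units.val_mul, Units.val_mul, h₁, h₂]
    ring)

theorem mulDefectIdeal_le_of_trace_eq_add [IsLocalRing R] {g₀ : G} {l₁ l₂ : R}
    (h2 : IsUnit (2 : R)) (hl : IsUnit (l₁ - l₂)) (ht₀ : t g₀ = l₁ + l₂)
    (ht₀₀ : t (g₀ * g₀) = l₁ ^ 2 + l₂ ^ 2) (ϑ₁ ϑ₂ : G →* (R ⧸ J)ˣ)
    (hsum : ∀ g, Ideal.Quotient.mk J (t g) = (ϑ₁ g : R ⧸ J) + (ϑ₂ g : R ⧸ J)) :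
    mulDefectIdeal (diagEntryOfTrace t g₀ l₁ l₂) ≤ J := by
  rcases subsingleton_or_nontrivial (R ⧸ J) with hJ | hJ
  · rw [Ideal.Quotient.subsingleton_iff.mp hJ]
    exact le_top
  have := IsLocalRing.of_surjective' (Ideal.Quotient.mk J) Ideal.Quotient.mk_surjective
  set q := Ideal.Quotient.mk J
  have hdefect : ∀ χ : G →* (R ⧸ J)ˣ, (∀ g, q (diagEntryOfTrace t g₀ l₁ l₂ g) = χ g) →
      mulDefectIdeal (diagEntryOfTrace t g₀ l₁ l₂) ≤ J := fun χ hχ =>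
    mulDefectIdeal_le_iff.mpr fun g g' => by rw [hχ, hχ, hχ, map_mul, Units.val_mul]
  have hpair := pair_eq_or_swap_of_add_eq_of_sq_add_sq_eq (x := (ϑ₁ g₀ : R ⧸ J)) (y := ϑ₂ g₀)
    (by simpa only [map_ofNat] using h2.map q) (by simpa only [map_sub] using hl.map q)
    (by rw [← hsum, ht₀, map_add])
    (by rw [← map_pow, ← map_pow, ← map_add, ← ht₀₀, hsum, map_mul, map_mul, Units.val_mul,
      Units.val_mul, sq, sq])
  rcases hpair with ⟨h₁, h₂⟩ | ⟨h₁, h₂⟩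
  · exact hdefect ϑ₁ (map_diagEntryOfTrace_eq_of_trace_eq_add q hl ϑ₁ ϑ₂ hsum h₁ h₂)
  · exact hdefect ϑ₂ (map_diagEntryOfTrace_eq_of_trace_eq_add q hl ϑ₂ ϑ₁
      (fun g => by rw [hsum, add_comm]) h₂ h₁)

end MulDefect

theorem stmt2_general {R : Type*} [CommRing R] [IsLocalRing R]
    (hchar : (2 : R) ∉ IsLocalRing.maximalIdeal R)
    {K : Type*} [Field K] [Algebra R K] [IsFractionRing R K]
    {G : Type*} [Group G] (ρ : G →* Matrix.GeneralLinearGroup (Fin 2) K)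
    (t : G → R)
    (htr : ∀ g : G, algebraMap R K (t g) = Matrix.trace ((ρ g : Matrix (Fin 2) (Fin 2) K)))
    (g₀ : G) (lam₁ lam₂ : R)
    (hdiag : (ρ g₀ : Matrix (Fin 2) (Fin 2) K)
      = Matrix.diagonal ![algebraMap R K lam₁, algebraMap R K lam₂])
    (hdist : lam₁ - lam₂ ∉ IsLocalRing.maximalIdeal R) :
    ∃! I : Ideal R, ∀ J : Ideal R,
      I ≤ J ↔ ∃ ϑ₁ ϑ₂ : G →* (R ⧸ J)ˣ,
        ∀ g : G, Ideal.Quotient.mk J (t g) = (ϑ₁ g : R ⧸ J) + (ϑ₂ g : R ⧸ J) := by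
  have hinj := IsFractionRing.injective R K
  have h2 : IsUnit (2 : R) := by simpa using hchar
  have hl : IsUnit (lam₁ - lam₂) := by simpa using hdist
  set α := diagEntryOfTrace t g₀ lam₁ lam₂
  have hα : ∀ g, algebraMap R K (α g) = (ρ g : Matrix (Fin 2) (Fin 2) K) 0 0 := fun g =>
    map_diagEntryOfTrace_eq _ hl (by
      rw [htr, htr, map_mul, Units.val_mul, hdiag, Matrix.sub_mul_apply_zero_zero_eq_trace])
  have hδ : ∀ g, algebraMap R K ((t - α) g) = (ρ g : Matrix (Fin 2) (Fin 2) K) 1 1 := fun g => by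
    rw [Pi.sub_apply, map_sub, htr, hα, Matrix.trace_fin_two, add_sub_cancel_left]
  have ht₀ : t g₀ = lam₁ + lam₂ := hinj (by simp [htr, hdiag])
  have ht₀₀ : t (g₀ * g₀) = lam₁ ^ 2 + lam₂ ^ 2 := hinj (by simp [htr, hdiag, sq])
  refine existsUnique_forall_le_iff fun J =>
    ⟨exists_characters_of_mulDefectIdeal_le (t := t) (α := α) ?_ ?_ ?_, fun ⟨ϑ₁, ϑ₂, hsum⟩ =>
      mulDefectIdeal_le_of_trace_eq_add h2 hl ht₀ ht₀₀ ϑ₁ ϑ₂ hsum⟩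
  · exact hinj (by rw [hα, map_one, map_one, Units.val_one, Matrix.one_apply_eq])
  · exact hinj (by rw [← Pi.sub_apply, hδ, map_one, map_one, Units.val_one, Matrix.one_apply_eq])
  · intro g g'
    apply hinj
    rw [map_mulDefect, map_mulDefect]
    simp only [mulDefect, Function.comp_apply, hα, hδ, map_mul, Units.val_mul]
    exact Matrix.mul_apply_one_one_sub_mul _ _

/-- the ideal of reducibility.  Let `R` be a local domain with maximal ideal
`m` and residue characteristic `≠ 2`, `K = Frac(R)`, and `ρ : G → GL₂(K)` with traces in `R`
(witnessed by a lift `t : G → R` of the trace), admitting `g₀ ∈ G` diagonalized with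
eigenvalues `λ₁, λ₂ ∈ R` distinct mod `m`.  Then there is a unique ideal `I(ρ)` of `R` such
that for every ideal `J` of `R`: `I(ρ) ⊆ J` iff there exist characters
`ϑ₁, ϑ₂ : G → (R/J)ˣ` with `tr ρ mod J = ϑ₁ + ϑ₂`. -/
theorem stmt2 {R : Type*} [CommRing R] [IsDomain R] [IsLocalRing R]
    (hchar : (2 : R) ∉ IsLocalRing.maximalIdeal R)
    {K : Type*} [Field K] [Algebra R K] [IsFractionRing R K]
    {G : Type*} [Group G] (ρ : G →* Matrix.GeneralLinearGroup (Fin 2) K)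
    (t : G → R)
    (htr : ∀ g : G, algebraMap R K (t g) = Matrix.trace ((ρ g : Matrix (Fin 2) (Fin 2) K)))
    (g₀ : G) (lam₁ lam₂ : R)
    (hdiag : (ρ g₀ : Matrix (Fin 2) (Fin 2) K)
      = Matrix.diagonal ![algebraMap R K lam₁, algebraMap R K lam₂])
    (hdist : lam₁ - lam₂ ∉ IsLocalRing.maximalIdeal R) :
    ∃! I : Ideal R, ∀ J : Ideal R,
      I ≤ J ↔ ∃ ϑ₁ ϑ₂ : G →* (R ⧸ J)ˣ,
        ∀ g : G, Ideal.Quotient.mk J (t g) = (ϑ₁ g : R ⧸ J) + (ϑ₂ g : R ⧸ J) :=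
  stmt2_general hchar ρ t htr g₀ lam₁ lam₂ hdiag hdist
end

section
/- In the setting of the ideal of reducibility: if J ⊆ m is an ideal of R and tr ρ mod J = ϑ₁ + ϑ₂ for characters ϑ₁, ϑ₂ : G → (R/J)×, then the unordered pair {ϑ₁, ϑ₂} is uniquely determined, i.e. if also tr ρ mod J = ϑ₁′ + ϑ₂′ for characters ϑ₁′, ϑ₂′, then {ϑ₁′, ϑ₂′} = {ϑ₁, ϑ₂}. -/
/-- In the setting of the ideal of reducibility (local domain `R` with
maximal ideal `m`, residue characteristic `≠ 2`, `ρ : G → GL₂(Frac R)` with traces in `R`,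
`g₀ ∈ G` diagonalized with eigenvalues in `R` distinct mod `m`): if `J ⊆ m` is an ideal and
`tr ρ mod J = ϑ₁ + ϑ₂ = ϑ₁′ + ϑ₂′` for characters `ϑ₁, ϑ₂, ϑ₁′, ϑ₂′ : G → (R/J)ˣ`, then
`{ϑ₁′, ϑ₂′} = {ϑ₁, ϑ₂}`. -/
theorem stmt3 {R : Type*} [CommRing R] [IsDomain R] [IsLocalRing R]
    (hchar : (2 : R) ∉ IsLocalRing.maximalIdeal R)
    {K : Type*} [Field K] [Algebra R K] [IsFractionRing R K]
    {G : Type*} [Group G] (ρ : G →* Matrix.GeneralLinearGroup (Fin 2) K)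
    (t : G → R)
    (htr : ∀ g : G, algebraMap R K (t g) = Matrix.trace ((ρ g : Matrix (Fin 2) (Fin 2) K)))
    (g₀ : G) (lam₁ lam₂ : R)
    (hdiag : (ρ g₀ : Matrix (Fin 2) (Fin 2) K)
      = Matrix.diagonal ![algebraMap R K lam₁, algebraMap R K lam₂])
    (hdist : lam₁ - lam₂ ∉ IsLocalRing.maximalIdeal R)
    (J : Ideal R) (hJ : J ≤ IsLocalRing.maximalIdeal R)
    (ϑ₁ ϑ₂ ϑ₁' ϑ₂' : G →* (R ⧸ J)ˣ)
    (h : ∀ g : G, Ideal.Quotient.mk J (t g) = (ϑ₁ g : R ⧸ J) + (ϑ₂ g : R ⧸ J))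
    (h' : ∀ g : G, Ideal.Quotient.mk J (t g) = (ϑ₁' g : R ⧸ J) + (ϑ₂' g : R ⧸ J)) :
    (ϑ₁' = ϑ₁ ∧ ϑ₂' = ϑ₂) ∨ (ϑ₁' = ϑ₂ ∧ ϑ₂' = ϑ₁) := by
  have hinj : Function.Injective (algebraMap R K) := IsFractionRing.injective R K
  have hJne : J ≠ ⊤ := fun hc => (IsLocalRing.maximalIdeal.isMaximal R).ne_top
    (top_le_iff.mp (hc ▸ hJ))
  have : Nontrivial (R ⧸ J) := Ideal.Quotient.nontrivial_iff.mpr hJne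
  have : IsLocalRing (R ⧸ J) :=
    IsLocalRing.of_surjective' (Ideal.Quotient.mk J) Ideal.Quotient.mk_surjective
  set q : R →+* R ⧸ J := Ideal.Quotient.mk J with hq
  have unit_of_not_mem : ∀ x : R, x ∉ IsLocalRing.maximalIdeal R → IsUnit (q x) := by
    intro x hx
    have : IsUnit x := by
      by_contra hc
      exact hx ((IsLocalRing.mem_maximalIdeal x).mpr (mem_nonunits_iff.mpr hc))
    exact this.map q
  have h2 : IsUnit (2 : R ⧸ J) := by
    have := unit_of_not_mem 2 hchar
    rwa [map_ofNat] at this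
  have hlam : IsUnit (q lam₁ - q lam₂) := by
    rw [← map_sub]; exact unit_of_not_mem _ hdist
  have ht0 : t g₀ = lam₁ + lam₂ := by
    apply hinj
    rw [htr g₀, hdiag, Matrix.trace_diagonal, Fin.sum_univ_two, map_add]
    simp
  have ht0sq : t (g₀ * g₀) = lam₁ ^ 2 + lam₂ ^ 2 := by
    apply hinj
    have : ((ρ (g₀ * g₀) : Matrix (Fin 2) (Fin 2) K))
        = (ρ g₀ : Matrix (Fin 2) (Fin 2) K) * (ρ g₀ : Matrix (Fin 2) (Fin 2) K) := by
      rw [map_mul]; rfl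
    rw [htr (g₀ * g₀), this, hdiag, Matrix.diagonal_mul_diagonal, Matrix.trace_diagonal,
      Fin.sum_univ_two]
    simp [sq]
  have e1 : ((ϑ₁ g₀ : R ⧸ J)) + (ϑ₂ g₀ : R ⧸ J) = q lam₁ + q lam₂ := by
    rw [← map_add, ← ht0, h g₀]
  have e1' : ((ϑ₁' g₀ : R ⧸ J)) + (ϑ₂' g₀ : R ⧸ J) = q lam₁ + q lam₂ := by
    rw [← map_add, ← ht0, h' g₀]
  have e2 : ((ϑ₁ g₀ : R ⧸ J)) * (ϑ₁ g₀ : R ⧸ J) + (ϑ₂ g₀ : R ⧸ J) * (ϑ₂ g₀ : R ⧸ J)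
      = q lam₁ ^ 2 + q lam₂ ^ 2 := by
    have := h (g₀ * g₀)
    rw [ht0sq] at this
    simp only [map_mul, map_add, map_pow, Units.val_mul] at this
    rw [← this]
  have e2' : ((ϑ₁' g₀ : R ⧸ J)) * (ϑ₁' g₀ : R ⧸ J) + (ϑ₂' g₀ : R ⧸ J) * (ϑ₂' g₀ : R ⧸ J)
      = q lam₁ ^ 2 + q lam₂ ^ 2 := by
    have := h' (g₀ * g₀)
    rw [ht0sq] at this
    simp only [map_mul, map_add, map_pow, Units.val_mul] at this
    rw [← this]
  have key : ∀ g : G, (ϑ₁ g : R ⧸ J) + (ϑ₂ g : R ⧸ J) = (ϑ₁' g : R ⧸ J) + (ϑ₂' g : R ⧸ J) :=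
    fun g => by rw [← h g, ← h' g]
  have key0 : ∀ g : G, ((ϑ₁ g₀ : R ⧸ J)) * (ϑ₁ g : R ⧸ J) + ((ϑ₂ g₀ : R ⧸ J)) * (ϑ₂ g : R ⧸ J)
      = ((ϑ₁' g₀ : R ⧸ J)) * (ϑ₁' g : R ⧸ J) + ((ϑ₂' g₀ : R ⧸ J)) * (ϑ₂' g : R ⧸ J) := by
    intro g
    have hx := h (g₀ * g)
    have hx' := h' (g₀ * g)
    simp only [map_mul, Units.val_mul] at hx hx'
    rw [← hx, ← hx']
  set a : R ⧸ J := (ϑ₁ g₀ : R ⧸ J) with hA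
  set b : R ⧸ J := (ϑ₂ g₀ : R ⧸ J) with hB
  set a' : R ⧸ J := (ϑ₁' g₀ : R ⧸ J) with hA'
  set b' : R ⧸ J := (ϑ₂' g₀ : R ⧸ J) with hB'
  have hab_sq : (a - b) * (a - b) = (q lam₁ - q lam₂) * (q lam₁ - q lam₂) := by
    linear_combination 2 * e2 - (a + b + q lam₁ + q lam₂) * e1
  have hab : IsUnit (a - b) := by
    have : IsUnit ((a - b) * (a - b)) := by
      rw [hab_sq]; exact hlam.mul hlam
    exact isUnit_of_mul_isUnit_left this
  have hprod2 : (2 : R ⧸ J) * (a' * b') = 2 * (a * b) := by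
    linear_combination e2 - (a + b + q lam₁ + q lam₂) * e1
      - e2' + (a' + b' + q lam₁ + q lam₂) * e1'
  have hprod : a' * b' = a * b := h2.mul_left_cancel hprod2
  have hsum : a' + b' = a + b := by rw [e1, e1']
  have hzero : (a' - a) * (a' - b) = 0 := by
    linear_combination a' * hsum - hprod
  have hdisj : a' = a ∨ a' = b := by
    have hu : IsUnit ((a - a') + (a' - b)) := by
      have : (a - a') + (a' - b) = a - b := by ring
      rw [this]; exact hab
    rcases IsLocalRing.isUnit_or_isUnit_of_isUnit_add hu with hu1 | hu2
    · right
      have hu1' : IsUnit (a' - a) := by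
        have : a' - a = -(a - a') := by ring
        rw [this]; exact hu1.neg
      have := hu1'.mul_left_cancel (b := a' - b) (c := 0) (by rw [hzero, mul_zero])
      exact sub_eq_zero.mp this
    · left
      have hz : (a' - b) * (a' - a) = 0 := by rw [mul_comm]; exact hzero
      have := hu2.mul_left_cancel (b := a' - a) (c := 0) (by rw [hz, mul_zero])
      exact sub_eq_zero.mp this
  rcases hdisj with ha | ha
  · left
    have hb : b' = b := by
      have h6 := hsum; rw [ha] at h6
      linear_combination h6
    constructor
    · ext g
      have e3 := key0 g
      rw [ha, hb] at e3
      have e4 := key g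
      have hz : (a - b) * ((ϑ₁' g : R ⧸ J) - (ϑ₁ g : R ⧸ J)) = 0 := by
        linear_combination b * e4 - e3
      have h5 := hab.mul_left_cancel (b := ((ϑ₁' g : R ⧸ J) - (ϑ₁ g : R ⧸ J))) (c := 0)
        (by rw [hz, mul_zero])
      exact sub_eq_zero.mp h5
    · ext g
      have e3 := key0 g
      rw [ha, hb] at e3
      have e4 := key g
      have hz : (a - b) * ((ϑ₂' g : R ⧸ J) - (ϑ₂ g : R ⧸ J)) = 0 := by
        linear_combination e3 - a * e4
      have h5 := hab.mul_left_cancel (b := ((ϑ₂' g : R ⧸ J) - (ϑ₂ g : R ⧸ J))) (c := 0)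
        (by rw [hz, mul_zero])
      exact sub_eq_zero.mp h5
  · right
    have hb : b' = a := by
      have h6 := hsum; rw [ha] at h6
      linear_combination h6
    constructor
    · ext g
      have e3 := key0 g
      rw [ha, hb] at e3
      have e4 := key g
      have hz : (a - b) * ((ϑ₁' g : R ⧸ J) - (ϑ₂ g : R ⧸ J)) = 0 := by
        linear_combination e3 - a * e4
      have h5 := hab.mul_left_cancel (b := ((ϑ₁' g : R ⧸ J) - (ϑ₂ g : R ⧸ J))) (c := 0)
        (by rw [hz, mul_zero])
      exact sub_eq_zero.mp h5
    · ext g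
      have e3 := key0 g
      rw [ha, hb] at e3
      have e4 := key g
      have hz : (a - b) * ((ϑ₂' g : R ⧸ J) - (ϑ₁ g : R ⧸ J)) = 0 := by
        linear_combination b * e4 - e3
      have h5 := hab.mul_left_cancel (b := ((ϑ₂' g : R ⧸ J) - (ϑ₁ g : R ⧸ J))) (c := 0)
        (by rw [hz, mul_zero])
      exact sub_eq_zero.mp h5
end

section
/- Let F be a field, G a group, and ψ₁, ψ₂, ψ₁′, ψ₂′ : G → F× characters such that ψ₁ + ψ₂ = ψ₁′ + ψ₂′ (as functions on G) and such that for each g ∈ G the multisets {ψ₁(g), ψ₂(g)} and {ψ₁′(g), ψ₂′(g)} are equal. Suppose there exists g₀ ∈ G with ψ₁(g₀) ≠ ψ₂(g₀). Then {ψ₁, ψ₂} = {ψ₁′, ψ₂′} as sets of characters. -/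
private lemma stmt5_aux {F : Type*} [Field F] {G : Type*} [Group G]
    (χ₁ χ₂ χ₁' χ₂' : G →* Fˣ)
    (hmult : ∀ g : G, (χ₁' g = χ₁ g ∧ χ₂' g = χ₂ g) ∨ (χ₁' g = χ₂ g ∧ χ₂' g = χ₁ g))
    (g₀ : G) (hdist : χ₁ g₀ ≠ χ₂ g₀) (h0 : χ₁' g₀ = χ₁ g₀) : χ₁' = χ₁ := by
  ext g
  rcases hmult g with ⟨h1, _⟩ | ⟨h1, _⟩
  · exact congrArg Units.val h1
  · by_cases heq : χ₂ g = χ₁ g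
    · rw [h1, heq]
    · rcases hmult (g₀ * g) with ⟨h2, _⟩ | ⟨h2, _⟩
      · rw [map_mul, map_mul, h0, h1] at h2
        exact absurd (mul_left_cancel h2) heq
      · rw [map_mul, map_mul, h0, h1] at h2
        exact absurd (mul_right_cancel h2) hdist

/-- Let `F` be a field, `G` a group, and `ψ₁, ψ₂, ψ₁′, ψ₂′ : G → Fˣ`
characters with `ψ₁ + ψ₂ = ψ₁′ + ψ₂′` pointwise, such that for each `g` the multisets
`{ψ₁ g, ψ₂ g}` and `{ψ₁′ g, ψ₂′ g}` coincide.  If `ψ₁ g₀ ≠ ψ₂ g₀` for some `g₀`, then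
`{ψ₁, ψ₂} = {ψ₁′, ψ₂′}` as sets of characters. -/
theorem stmt5 {F : Type*} [Field F] {G : Type*} [Group G]
    (ψ₁ ψ₂ ψ₁' ψ₂' : G →* Fˣ)
    (hsum : ∀ g : G, (ψ₁ g : F) + ψ₂ g = (ψ₁' g : F) + ψ₂' g)
    (hmult : ∀ g : G, (ψ₁' g = ψ₁ g ∧ ψ₂' g = ψ₂ g) ∨ (ψ₁' g = ψ₂ g ∧ ψ₂' g = ψ₁ g))
    (g₀ : G) (hdist : ψ₁ g₀ ≠ ψ₂ g₀) :
    (ψ₁' = ψ₁ ∧ ψ₂' = ψ₂) ∨ (ψ₁' = ψ₂ ∧ ψ₂' = ψ₁) := by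
  have hmultA : ∀ g : G, (ψ₂' g = ψ₂ g ∧ ψ₁' g = ψ₁ g) ∨ (ψ₂' g = ψ₁ g ∧ ψ₁' g = ψ₂ g) :=
    fun g => (hmult g).imp And.symm And.symm
  have hmultB : ∀ g : G, (ψ₁' g = ψ₂ g ∧ ψ₂' g = ψ₁ g) ∨ (ψ₁' g = ψ₁ g ∧ ψ₂' g = ψ₂ g) :=
    fun g => (hmult g).symm
  have hmultC : ∀ g : G, (ψ₂' g = ψ₁ g ∧ ψ₁' g = ψ₂ g) ∨ (ψ₂' g = ψ₂ g ∧ ψ₁' g = ψ₁ g) :=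
    fun g => (hmultA g).symm
  rcases hmult g₀ with ⟨h1, h2⟩ | ⟨h1, h2⟩
  · left
    exact ⟨stmt5_aux ψ₁ ψ₂ ψ₁' ψ₂' hmult g₀ hdist h1,
      stmt5_aux ψ₂ ψ₁ ψ₂' ψ₁' hmultA g₀ hdist.symm h2⟩
  · right
    exact ⟨stmt5_aux ψ₂ ψ₁ ψ₁' ψ₂' hmultB g₀ hdist.symm h1,
      stmt5_aux ψ₁ ψ₂ ψ₂' ψ₁' hmultC g₀ hdist h2⟩
end

section
/- Let A be a discrete valuation ring with uniformizer ϖ, residue characteristic ≠ 2, K = Frac(A), and ρ : G → Aut_K(V) a 2-dimensional representation admitting a G-stable A-lattice T. Assume there exists g₀ ∈ G whose characteristic polynomial has roots in A distinct mod ϖ. Then the ideal of reducibility satisfies I(ρ) ⊆ (ϖ) if and only if the semi-simplification of T/ϖT is a direct sum of two characters A/(ϖ)(ψ₁) ⊕ A/(ϖ)(ψ₂); moreover, in that case ψ₁ ≠ ψ₂. -/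
/-!
The eigenvalues `λ₁, λ₂` of `ρ g₀` differ by a unit, so the projections onto its eigenlines are
`A`-combinations of `1` and `ρ g₀`; over the PID `A` this gives `T = A α e₀ ⊕ A β e₁`. In this
basis `ρ g` has an integral matrix `!![a, b; c, d]` and `I(ρ)` is generated by the products
`b g * c g'`. If these all lie in the prime `(ϖ)`, then `c ≡ 0` or `b ≡ 0`, and the corresponding
eigenline plus `ϖ T` is the required `W`, with characters `a` and `d` mod `ϖ`. Conversely
`W / ϖ T` is an eigenline of `ρ g₀` mod `ϖ`, which puts `(λ₁ - s) * b g` and `(λ₂ - s) * c g'`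
into `(ϖ)`; as `λ₁ ≢ λ₂`, one of `b g`, `c g'` lies in `(ϖ)`. Finally `ψ₁ = ψ₂ = ψ` is
impossible because `(λ₁ - λ₂)² = 2 tr ρ(g₀²) - (tr ρ g₀)² ≡ 4 ψ(g₀)² - 4 ψ(g₀)² = 0`.
-/

open Matrix

variable {A : Type*} [CommRing A] {K : Type*} [Field K] [Algebra A K]
  {G : Type*} [Group G]

/-- `T` is a `G`-stable `A`-lattice of `V = K²` for the representation `ρ`. -/
def IsStableLattice (ρ : G →* Matrix.GeneralLinearGroup (Fin 2) K)
    (T : Submodule A (Fin 2 → K)) : Prop :=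
  T.FG ∧ Submodule.span K (T : Set (Fin 2 → K)) = ⊤ ∧
    ∀ g : G, ∀ v ∈ T, ((ρ g : Matrix (Fin 2) (Fin 2) K).mulVec v) ∈ T

variable (A) in
def reducibilityIdeal (ρ : G →* GL (Fin 2) K) : Ideal A :=
  Ideal.span {r | ∃ g g' : G, algebraMap A K r =
    (ρ g : Matrix (Fin 2) (Fin 2) K) 0 1 * (ρ g' : Matrix (Fin 2) (Fin 2) K) 1 0}

/-- `(T / I T)ˢˢ ≅ (A ⧸ I)(ψ₁) ⊕ (A ⧸ I)(ψ₂)`, witnessed by a `G`-stable `I T ≤ W ≤ T` such that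
`G` acts on `W / I T` through `ψ₁` and on `T / W` through `ψ₂`; `s₁, s₂` lift the characters. -/
def IsReducibleModulo (ρ : G →* GL (Fin 2) K) (T : Submodule A (Fin 2 → K)) (I : Ideal A) :
    Prop :=
  ∃ (ψ₁ ψ₂ : G →* (A ⧸ I)ˣ) (s₁ s₂ : G → A) (W : Submodule A (Fin 2 → K)),
    (∀ g, Ideal.Quotient.mk I (s₁ g) = ψ₁ g) ∧ (∀ g, Ideal.Quotient.mk I (s₂ g) = ψ₂ g) ∧
    I • T ≤ W ∧ W ≤ T ∧ (∀ g, ∀ v ∈ W, (ρ g : Matrix (Fin 2) (Fin 2) K) *ᵥ v ∈ W) ∧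
    (∀ g, ∀ v ∈ W,
      (ρ g : Matrix (Fin 2) (Fin 2) K) *ᵥ v - algebraMap A K (s₁ g) • v ∈ I • T) ∧
    (∀ g, ∀ v ∈ T, (ρ g : Matrix (Fin 2) (Fin 2) K) *ᵥ v - algebraMap A K (s₂ g) • v ∈ W)

theorem Ideal.exists_monoidHom_units_quotient {I : Ideal A} {s : G → A} (h_one : s 1 = 1)
    (h_mul : ∀ g h,
      Ideal.Quotient.mk I (s (g * h)) = Ideal.Quotient.mk I (s g) * Ideal.Quotient.mk I (s h)) :
    ∃ ψ : G →* (A ⧸ I)ˣ, ∀ g, Ideal.Quotient.mk I (s g) = ψ g :=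
  ⟨MonoidHom.toHomUnits
    { toFun := fun g => Ideal.Quotient.mk I (s g), map_one' := by simp [h_one], map_mul' := h_mul },
    fun _ => rfl⟩

theorem Ideal.sub_mem_of_mk_add_eq_of_mk_add_sq_eq {I : Ideal A} [I.IsPrime] {x y : A}
    {u : A ⧸ I} (h₁ : Ideal.Quotient.mk I (x + y) = 2 * u)
    (h₂ : Ideal.Quotient.mk I (x ^ 2 + y ^ 2) = 2 * u ^ 2) :
    x - y ∈ I := by
  refine ‹I.IsPrime›.mem_of_pow_mem 2 (Ideal.Quotient.eq_zero_iff_mem.mp ?_)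
  have : (x - y) ^ 2 = 2 * (x ^ 2 + y ^ 2) - (x + y) ^ 2 := by ring
  rw [this, map_sub, map_mul, map_pow, h₁, h₂, map_ofNat]
  ring

/-- `(F₁, F₂)` is an `A`-basis of `T` in which `ρ g` has the matrix `!![a g, b g; c g, d g]`. -/
structure IsLatticeMatrix (ρ : G →* GL (Fin 2) K) (T : Submodule A (Fin 2 → K))
    (F₁ F₂ : Fin 2 → K) (a b c d : G → A) : Prop where
  mem_iff : ∀ v, v ∈ T ↔ ∃ x y : A, x • F₁ + y • F₂ = v
  linearIndependent : LinearIndependent A ![F₁, F₂]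
  mulVec_fst : ∀ g, (ρ g : Matrix (Fin 2) (Fin 2) K) *ᵥ F₁ = a g • F₁ + c g • F₂
  mulVec_snd : ∀ g, (ρ g : Matrix (Fin 2) (Fin 2) K) *ᵥ F₂ = b g • F₁ + d g • F₂

namespace IsLatticeMatrix

variable {ρ : G →* GL (Fin 2) K} {T : Submodule A (Fin 2 → K)} {F₁ F₂ : Fin 2 → K}
  {a b c d : G → A}

theorem swap (M : IsLatticeMatrix ρ T F₁ F₂ a b c d) : IsLatticeMatrix ρ T F₂ F₁ d c b a where
  mem_iff v := by
    rw [M.mem_iff]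
    exact ⟨fun ⟨x, y, h⟩ => ⟨y, x, by rw [← h, add_comm]⟩,
      fun ⟨y, x, h⟩ => ⟨x, y, by rw [← h, add_comm]⟩⟩
  linearIndependent := LinearIndependent.pair_symm_iff.mp M.linearIndependent
  mulVec_fst g := by rw [M.mulVec_snd, add_comm]
  mulVec_snd g := by rw [M.mulVec_fst, add_comm]

theorem fst_mem (M : IsLatticeMatrix ρ T F₁ F₂ a b c d) : F₁ ∈ T :=
  (M.mem_iff _).mpr ⟨1, 0, by simp⟩

theorem mulVec_mem (M : IsLatticeMatrix ρ T F₁ F₂ a b c d) (g : G) {v : Fin 2 → K} (hv : v ∈ T) :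
    (ρ g : Matrix (Fin 2) (Fin 2) K) *ᵥ v ∈ T := by
  obtain ⟨x, y, rfl⟩ := (M.mem_iff v).mp hv
  rw [mulVec_add, mulVec_smul, mulVec_smul, M.mulVec_fst, M.mulVec_snd, M.mem_iff]
  exact ⟨x * a g + y * b g, x * c g + y * d g, by module⟩

theorem eq_of_add_eq (M : IsLatticeMatrix ρ T F₁ F₂ a b c d) {x y x' y' : A}
    (h : x • F₁ + y • F₂ = x' • F₁ + y' • F₂) : x = x' ∧ y = y' := by
  have := LinearIndependent.pair_iff.mp M.linearIndependent (x - x') (y - y')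
    (by rw [sub_smul, sub_smul]; linear_combination (exp := 1) h)
  exact ⟨sub_eq_zero.mp this.1, sub_eq_zero.mp this.2⟩

theorem mem_of_add_mem_smul (M : IsLatticeMatrix ρ T F₁ F₂ a b c d) {I : Ideal A} {x y : A}
    (h : x • F₁ + y • F₂ ∈ I • T) : x ∈ I ∧ y ∈ I := by
  suffices ∀ v ∈ I • T, ∃ x ∈ I, ∃ y ∈ I, x • F₁ + y • F₂ = v by
    obtain ⟨x', hx', y', hy', hv⟩ := this _ h
    obtain ⟨rfl, rfl⟩ := M.eq_of_add_eq hv.symm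
    exact ⟨hx', hy'⟩
  intro v hv
  refine Submodule.smul_induction_on hv (fun r hr w hw => ?_) (fun v w hv hw => ?_)
  · obtain ⟨x, y, rfl⟩ := (M.mem_iff w).mp hw
    exact ⟨r * x, I.mul_mem_right x hr, r * y, I.mul_mem_right y hr, by module⟩
  · obtain ⟨x, hx, y, hy, rfl⟩ := hv
    obtain ⟨x', hx', y', hy', rfl⟩ := hw
    exact ⟨x + x', I.add_mem hx hx', y + y', I.add_mem hy hy', by module⟩

theorem topLeft_mul (M : IsLatticeMatrix ρ T F₁ F₂ a b c d) (g h : G) :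
    a (g * h) = a g * a h + b g * c h := by
  have : (ρ (g * h) : Matrix (Fin 2) (Fin 2) K) *ᵥ F₁
      = (a g * a h + b g * c h) • F₁ + (c g * a h + d g * c h) • F₂ := by
    rw [map_mul, Units.val_mul, ← mulVec_mulVec, M.mulVec_fst, mulVec_add, mulVec_smul,
      mulVec_smul, M.mulVec_fst, M.mulVec_snd]
    module
  exact (M.eq_of_add_eq ((M.mulVec_fst _).symm.trans this)).1

theorem topLeft_one (M : IsLatticeMatrix ρ T F₁ F₂ a b c d) : a 1 = 1 := by
  have h := M.mulVec_fst 1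
  rw [map_one, Units.val_one, one_mulVec] at h
  exact (M.eq_of_add_eq (x' := 1) (y' := 0) (by rw [← h, one_smul, zero_smul, add_zero])).1

theorem smul_mulVec_mem (M : IsLatticeMatrix ρ T F₁ F₂ a b c d) (I : Ideal A) (g : G)
    {v : Fin 2 → K} (hv : v ∈ I • T) : (ρ g : Matrix (Fin 2) (Fin 2) K) *ᵥ v ∈ I • T := by
  refine Submodule.smul_induction_on hv (fun r hr w hw => ?_) (fun v w hv hw => ?_)
  · rw [mulVec_smul]
    exact Submodule.smul_mem_smul hr (M.mulVec_mem g hw)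
  · rw [mulVec_add]
    exact add_mem hv hw

theorem isReducibleModulo_of_forall_mem (M : IsLatticeMatrix ρ T F₁ F₂ a b c d) {I : Ideal A}
    (hc : ∀ g, c g ∈ I) : IsReducibleModulo ρ T I := by
  have hmk_zero : ∀ {r : A}, r ∈ I → Ideal.Quotient.mk I r = 0 := Ideal.Quotient.eq_zero_iff_mem.mpr
  obtain ⟨ψ₁, hψ₁⟩ := Ideal.exists_monoidHom_units_quotient (I := I) M.topLeft_one
    fun g h => by
      rw [M.topLeft_mul, map_add, map_mul, map_mul, hmk_zero (hc h), mul_zero, add_zero]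
  obtain ⟨ψ₂, hψ₂⟩ := Ideal.exists_monoidHom_units_quotient (I := I) M.swap.topLeft_one
    fun g h => by
      rw [M.swap.topLeft_mul, map_add, map_mul, map_mul, hmk_zero (hc g), zero_mul, add_zero]
  have hcF : ∀ g (x : A), (x * c g) • F₂ ∈ I • T := fun g x =>
    Submodule.smul_mem_smul (I.mul_mem_left x (hc g)) M.swap.fst_mem
  have hIT : I • T ≤ T := Submodule.smul_le_right
  set W := Submodule.span A {F₁} ⊔ I • T
  have hW : ∀ {v}, v ∈ W → ∃ x : A, ∃ w ∈ I • T, x • F₁ + w = v := fun hv => by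
    obtain ⟨y, hy, w, hw, rfl⟩ := Submodule.mem_sup.mp hv
    obtain ⟨x, rfl⟩ := Submodule.mem_span_singleton.mp hy
    exact ⟨x, w, hw, rfl⟩
  have hF₁W : ∀ x : A, x • F₁ ∈ W := fun x =>
    Submodule.mem_sup_left (Submodule.smul_mem _ x (Submodule.mem_span_singleton_self F₁))
  refine ⟨ψ₁, ψ₂, a, d, W, hψ₁, hψ₂, le_sup_right,
    sup_le ((Submodule.span_singleton_le_iff_mem _ _).mpr M.fst_mem) hIT, ?_, ?_, ?_⟩
  · rintro g v hv
    obtain ⟨x, w, hw, rfl⟩ := hW hv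
    have : (ρ g : Matrix (Fin 2) (Fin 2) K) *ᵥ (x • F₁ + w)
        = (x * a g) • F₁ + ((x * c g) • F₂ + (ρ g : Matrix (Fin 2) (Fin 2) K) *ᵥ w) := by
      rw [mulVec_add, mulVec_smul, M.mulVec_fst]
      module
    rw [this]
    exact add_mem (hF₁W _) (Submodule.mem_sup_right (add_mem (hcF g x) (M.smul_mulVec_mem I g hw)))
  · rintro g v hv
    obtain ⟨x, w, hw, rfl⟩ := hW hv
    have : (ρ g : Matrix (Fin 2) (Fin 2) K) *ᵥ (x • F₁ + w) - algebraMap A K (a g) • (x • F₁ + w)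
        = (x * c g) • F₂ + ((ρ g : Matrix (Fin 2) (Fin 2) K) *ᵥ w - a g • w) := by
      rw [mulVec_add, mulVec_smul, M.mulVec_fst, algebraMap_smul]
      module
    rw [this]
    exact add_mem (hcF g x) (sub_mem (M.smul_mulVec_mem I g hw) (Submodule.smul_mem _ _ hw))
  · rintro g v hv
    obtain ⟨x, y, rfl⟩ := (M.mem_iff v).mp hv
    have : (ρ g : Matrix (Fin 2) (Fin 2) K) *ᵥ (x • F₁ + y • F₂)
          - algebraMap A K (d g) • (x • F₁ + y • F₂)
        = (x * a g + y * b g - x * d g) • F₁ + (x * c g) • F₂ := by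
      rw [mulVec_add, mulVec_smul, mulVec_smul, M.mulVec_fst, M.mulVec_snd, algebraMap_smul]
      module
    rw [this]
    exact add_mem (hF₁W _) (Submodule.mem_sup_right (hcF g x))

theorem sub_mul_mem_of_mem (M : IsLatticeMatrix ρ T F₁ F₂ a b c d) {I : Ideal A} {g₀ : G}
    {μ₁ μ₂ s : A} (h₁ : (ρ g₀ : Matrix (Fin 2) (Fin 2) K) *ᵥ F₁ = μ₁ • F₁)
    (h₂ : (ρ g₀ : Matrix (Fin 2) (Fin 2) K) *ᵥ F₂ = μ₂ • F₂) {W : Submodule A (Fin 2 → K)}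
    (hW : ∀ v ∈ W, (ρ g₀ : Matrix (Fin 2) (Fin 2) K) *ᵥ v - algebraMap A K s • v ∈ I • T)
    {x y : A} (hv : x • F₁ + y • F₂ ∈ W) : (μ₂ - s) * y ∈ I := by
  have := hW _ hv
  rw [mulVec_add, mulVec_smul, mulVec_smul, h₁, h₂, algebraMap_smul,
    show x • μ₁ • F₁ + y • μ₂ • F₂ - s • (x • F₁ + y • F₂)
      = ((μ₁ - s) * x) • F₁ + ((μ₂ - s) * y) • F₂ by module] at this
  exact (M.mem_of_add_mem_smul this).2

theorem isReducibleModulo_iff (M : IsLatticeMatrix ρ T F₁ F₂ a b c d) {I : Ideal A} [I.IsPrime]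
    {g₀ : G} {μ₁ μ₂ : A} (h₁ : (ρ g₀ : Matrix (Fin 2) (Fin 2) K) *ᵥ F₁ = μ₁ • F₁)
    (h₂ : (ρ g₀ : Matrix (Fin 2) (Fin 2) K) *ᵥ F₂ = μ₂ • F₂) (hμ : μ₁ - μ₂ ∉ I) :
    IsReducibleModulo ρ T I ↔ ∀ g g', b g * c g' ∈ I := by
  constructor
  · rintro ⟨-, -, s₁, s₂, W, -, -, -, -, -, hW, hTW⟩ g g'
    have hb : (μ₁ - s₁ g₀) * b g ∈ I := by
      refine M.swap.sub_mul_mem_of_mem h₂ h₁ (hW g₀) (x := d g - s₂ g) ?_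
      convert hTW g F₂ M.swap.fst_mem using 1
      rw [M.mulVec_snd, algebraMap_smul]
      module
    have hc : (μ₂ - s₁ g₀) * c g' ∈ I := by
      refine M.sub_mul_mem_of_mem h₁ h₂ (hW g₀) (x := a g' - s₂ g') ?_
      convert hTW g' F₁ M.fst_mem using 1
      rw [M.mulVec_fst, algebraMap_smul]
      module
    by_contra hbc
    obtain ⟨hbg, hcg'⟩ := not_or.mp (mt (Ideal.IsPrime.mul_mem_iff_mem_or_mem ‹_›).mpr hbc)
    refine hμ ?_
    have := I.sub_mem ((Ideal.IsPrime.mem_or_mem ‹_› hb).resolve_right hbg)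
      ((Ideal.IsPrime.mem_or_mem ‹_› hc).resolve_right hcg')
    rwa [sub_sub_sub_cancel_right] at this
  · intro hbc
    by_cases hc : ∀ g, c g ∈ I
    · exact M.isReducibleModulo_of_forall_mem hc
    · obtain ⟨g₁, hg₁⟩ := not_forall.mp hc
      exact M.swap.isReducibleModulo_of_forall_mem fun g =>
        (Ideal.IsPrime.mem_or_mem ‹_› (hbc g g₁)).resolve_right hg₁

end IsLatticeMatrix

theorem exists_isLatticeMatrix {ρ : G →* GL (Fin 2) K} {T : Submodule A (Fin 2 → K)}
    {F₁ F₂ : Fin 2 → K} (hT : ∀ v, v ∈ T ↔ ∃ x y : A, x • F₁ + y • F₂ = v)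
    (hF : LinearIndependent A ![F₁, F₂])
    (hstab : ∀ g, ∀ v ∈ T, (ρ g : Matrix (Fin 2) (Fin 2) K) *ᵥ v ∈ T) :
    ∃ a b c d : G → A, IsLatticeMatrix ρ T F₁ F₂ a b c d := by
  have hF₁ : F₁ ∈ T := (hT _).mpr ⟨1, 0, by simp⟩
  have hF₂ : F₂ ∈ T := (hT _).mpr ⟨0, 1, by simp⟩
  choose a c hac using fun g => (hT _).mp (hstab g F₁ hF₁)
  choose b d hbd using fun g => (hT _).mp (hstab g F₂ hF₂)
  exact ⟨a, b, c, d, hT, hF, fun g => (hac g).symm, fun g => (hbd g).symm⟩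

theorem linearIndependent_single_pair [FaithfulSMul A K] {α β : K} (hα : α ≠ 0) (hβ : β ≠ 0) :
    LinearIndependent A ![Pi.single 0 α, (Pi.single 1 β : Fin 2 → K)] := by
  refine LinearIndependent.pair_iff.mpr fun x y h => ?_
  have h₀ := congrFun h 0
  have h₁ := congrFun h 1
  simp only [Pi.add_apply, Pi.smul_apply] at h₀ h₁
  simpa [Algebra.smul_def, hα, hβ] using And.intro h₀ h₁

theorem single_mem_of_diagonal_mulVec_mem {T : Submodule A (Fin 2 → K)} {μ₁ μ₂ : A}
    (hμ : IsUnit (μ₁ - μ₂))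
    (hT : ∀ v ∈ T, diagonal ![algebraMap A K μ₁, algebraMap A K μ₂] *ᵥ v ∈ T)
    {v : Fin 2 → K} (hv : v ∈ T) (i : Fin 2) : Pi.single i (v i) ∈ T := by
  -- `(μ₁ - μ₂) • Pi.single 0 (v 0) = D *ᵥ v - μ₂ • v`, and symmetrically for the index `1`.
  have hD (μ : A) := T.sub_mem (hT v hv) (T.smul_mem μ hv)
  fin_cases i
  · rw [← T.smul_mem_iff_of_isUnit hμ]
    convert hD μ₂ using 1
    funext j
    fin_cases j <;> simp [Algebra.smul_def, sub_mul]
  · rw [← T.smul_mem_iff_of_isUnit hμ.neg, neg_sub]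
    convert hD μ₁ using 1
    funext j
    fin_cases j <;> simp [Algebra.smul_def, sub_mul]

theorem exists_eq_span_singleton_of_fg [IsDomain A] [IsPrincipalIdealRing A] [IsFractionRing A K]
    {J : Submodule A K} (hJ : J.FG) : ∃ α : K, J = Submodule.span A {α} := by
  obtain ⟨α, hα⟩ := FractionalIdeal.isPrincipal (R := A) (K := K)
    ⟨J, FractionalIdeal.isFractional_of_fg hJ⟩
  exact ⟨α, by simpa using hα⟩

theorem exists_mem_iff_of_diagonal_mulVec_mem [IsDomain A] [IsPrincipalIdealRing A]
    [IsFractionRing A K] {T : Submodule A (Fin 2 → K)} (hfg : T.FG)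
    (hspan : Submodule.span K (T : Set (Fin 2 → K)) = ⊤) {μ₁ μ₂ : A} (hμ : IsUnit (μ₁ - μ₂))
    (hT : ∀ v ∈ T, diagonal ![algebraMap A K μ₁, algebraMap A K μ₂] *ᵥ v ∈ T) :
    ∃ α β : K, α ≠ 0 ∧ β ≠ 0 ∧
      ∀ v, v ∈ T ↔
        ∃ x y : A, x • (Pi.single 0 α : Fin 2 → K) + y • (Pi.single 1 β : Fin 2 → K) = v := by
  have hcoord (i : Fin 2) :
      ∃ α : K, α ≠ 0 ∧ Pi.single i α ∈ T ∧ ∀ v ∈ T, ∃ x : A, x • α = v i := by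
    obtain ⟨α, hα⟩ := exists_eq_span_singleton_of_fg
      (hfg.map ((LinearMap.proj i : (Fin 2 → K) →ₗ[K] K).restrictScalars A))
    have hmem : ∀ v ∈ T, v i ∈ Submodule.span A {α} := fun v hv =>
      hα ▸ Submodule.mem_map_of_mem hv
    refine ⟨α, ?_, ?_, fun v hv => Submodule.mem_span_singleton.mp (hmem v hv)⟩
    · rintro rfl
      have : Submodule.span K (T : Set (Fin 2 → K)) ≤ LinearMap.ker (LinearMap.proj i) :=
        Submodule.span_le.mpr fun v hv => by simpa using hmem v hv
      rw [hspan] at this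
      simpa using this (Submodule.mem_top (x := Pi.single i 1))
    · obtain ⟨v, hv, hvα⟩ := (hα ▸ Submodule.mem_span_singleton_self α :
        α ∈ T.map ((LinearMap.proj i : (Fin 2 → K) →ₗ[K] K).restrictScalars A))
      simpa [← hvα] using single_mem_of_diagonal_mulVec_mem hμ hT hv i
  choose α hα₀ hαT hα using hcoord
  refine ⟨α 0, α 1, hα₀ 0, hα₀ 1, fun v => ⟨fun hv => ?_, ?_⟩⟩
  · obtain ⟨x, hx⟩ := hα 0 v hv
    obtain ⟨y, hy⟩ := hα 1 v hv
    refine ⟨x, y, funext fun j => ?_⟩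
    fin_cases j <;> simp [hx, hy]
  · rintro ⟨x, y, rfl⟩
    exact add_mem (T.smul_mem x (hαT 0)) (T.smul_mem y (hαT 1))

theorem IsLatticeMatrix.algebraMap_mul [FaithfulSMul A K] {ρ : G →* GL (Fin 2) K}
    {T : Submodule A (Fin 2 → K)} {α β : K} {a b c d : G → A}
    (M : IsLatticeMatrix ρ T (Pi.single 0 α) (Pi.single 1 β) a b c d) (hα : α ≠ 0) (hβ : β ≠ 0)
    (g g' : G) :
    algebraMap A K (b g * c g')
      = (ρ g : Matrix (Fin 2) (Fin 2) K) 0 1 * (ρ g' : Matrix (Fin 2) (Fin 2) K) 1 0 := by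
  have hb : (ρ g : Matrix (Fin 2) (Fin 2) K) 0 1 * β = algebraMap A K (b g) * α := by
    simpa [mulVec_single, Algebra.smul_def] using congrFun (M.mulVec_snd g) 0
  have hc : (ρ g' : Matrix (Fin 2) (Fin 2) K) 1 0 * α = algebraMap A K (c g') * β := by
    simpa [mulVec_single, Algebra.smul_def] using congrFun (M.mulVec_fst g') 1
  refine mul_right_cancel₀ (mul_ne_zero hα hβ) ?_
  rw [map_mul]
  linear_combination
    -((ρ g' : Matrix (Fin 2) (Fin 2) K) 1 0 * α) * hb - algebraMap A K (b g) * α * hc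

theorem IsLatticeMatrix.reducibilityIdeal_le_iff [FaithfulSMul A K] {ρ : G →* GL (Fin 2) K}
    {T : Submodule A (Fin 2 → K)} {α β : K} {a b c d : G → A}
    (M : IsLatticeMatrix ρ T (Pi.single 0 α) (Pi.single 1 β) a b c d) (hα : α ≠ 0) (hβ : β ≠ 0)
    {I : Ideal A} : reducibilityIdeal A ρ ≤ I ↔ ∀ g g', b g * c g' ∈ I := by
  rw [reducibilityIdeal, Ideal.span_le]
  refine ⟨fun h g g' => h ⟨g, g', M.algebraMap_mul hα hβ g g'⟩, ?_⟩
  rintro h r ⟨g, g', hr⟩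
  rw [FaithfulSMul.algebraMap_injective A K (hr.trans (M.algebraMap_mul hα hβ g g').symm)]
  exact h g g'

theorem ne_of_trace_eq_add [FaithfulSMul A K] {I : Ideal A} [I.IsPrime]
    {ρ : G →* GL (Fin 2) K} {t : G → A}
    (htr : ∀ g, algebraMap A K (t g) = trace (ρ g : Matrix (Fin 2) (Fin 2) K))
    {g₀ : G} {μ₁ μ₂ : A}
    (hdiag : (ρ g₀ : Matrix (Fin 2) (Fin 2) K) = diagonal ![algebraMap A K μ₁, algebraMap A K μ₂])
    (hμ : μ₁ - μ₂ ∉ I) {ψ₁ ψ₂ : G →* (A ⧸ I)ˣ}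
    (hψ : ∀ g, Ideal.Quotient.mk I (t g) = ψ₁ g + ψ₂ g) : ψ₁ ≠ ψ₂ := by
  rintro rfl
  have htr₁ : t g₀ = μ₁ + μ₂ := FaithfulSMul.algebraMap_injective A K (by simp [htr, hdiag])
  have htr₂ : t (g₀ * g₀) = μ₁ ^ 2 + μ₂ ^ 2 := FaithfulSMul.algebraMap_injective A K (by
    simp [htr, hdiag, diagonal_mul_diagonal, sq])
  refine hμ (Ideal.sub_mem_of_mk_add_eq_of_mk_add_sq_eq (u := ψ₁ g₀) ?_ ?_)
  · rw [← htr₁, hψ, two_mul]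
  · rw [← htr₂, hψ, map_mul, Units.val_mul, two_mul, sq]

theorem stmt6_general [IsDomain A] [IsDiscreteValuationRing A] [IsFractionRing A K]
    (ϖ : A) (hϖ : Irreducible ϖ)
    (ρ : G →* Matrix.GeneralLinearGroup (Fin 2) K)
    (t : G → A)
    (htr : ∀ g : G, algebraMap A K (t g) = Matrix.trace ((ρ g : Matrix (Fin 2) (Fin 2) K)))
    (T : Submodule A (Fin 2 → K)) (hT : IsStableLattice ρ T)
    (g₀ : G) (lam₁ lam₂ : A)
    (hdiag : (ρ g₀ : Matrix (Fin 2) (Fin 2) K)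
      = Matrix.diagonal ![algebraMap A K lam₁, algebraMap A K lam₂])
    (hdist : lam₁ - lam₂ ∉ Ideal.span {ϖ}) :
    (Ideal.span {r : A | ∃ g g' : G,
        algebraMap A K r = (ρ g : Matrix (Fin 2) (Fin 2) K) 0 1
          * (ρ g' : Matrix (Fin 2) (Fin 2) K) 1 0} ≤ Ideal.span {ϖ}
      ↔ ∃ (ψ₁ ψ₂ : G →* (A ⧸ Ideal.span {ϖ})ˣ) (s₁ s₂ : G → A) (W : Submodule A (Fin 2 → K)),
          (∀ g, Ideal.Quotient.mk (Ideal.span {ϖ}) (s₁ g) = ψ₁ g) ∧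
          (∀ g, Ideal.Quotient.mk (Ideal.span {ϖ}) (s₂ g) = ψ₂ g) ∧
          Ideal.span {ϖ} • T ≤ W ∧ W ≤ T ∧
          (∀ g : G, ∀ v ∈ W, ((ρ g : Matrix (Fin 2) (Fin 2) K).mulVec v) ∈ W) ∧
          (∀ g : G, ∀ v ∈ W,
            ((ρ g : Matrix (Fin 2) (Fin 2) K).mulVec v) - algebraMap A K (s₁ g) • v
              ∈ Ideal.span {ϖ} • T) ∧
          (∀ g : G, ∀ v ∈ T,
            ((ρ g : Matrix (Fin 2) (Fin 2) K).mulVec v) - algebraMap A K (s₂ g) • v ∈ W)) ∧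
    (∀ (ψ₁ ψ₂ : G →* (A ⧸ Ideal.span {ϖ})ˣ),
      (∀ g : G, Ideal.Quotient.mk (Ideal.span {ϖ}) (t g) = (ψ₁ g : A ⧸ Ideal.span {ϖ}) + ψ₂ g) →
      ψ₁ ≠ ψ₂) := by
  obtain ⟨hfg, hspan, hstab⟩ := hT
  have : (Ideal.span {ϖ}).IsPrime :=
    hϖ.maximalIdeal_eq ▸ (IsLocalRing.maximalIdeal.isMaximal A).isPrime
  have hunit : IsUnit (lam₁ - lam₂) :=
    IsLocalRing.notMem_maximalIdeal.mp (hϖ.maximalIdeal_eq ▸ hdist)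
  obtain ⟨α, β, hα, hβ, hbasis⟩ :=
    exists_mem_iff_of_diagonal_mulVec_mem hfg hspan hunit (hdiag ▸ hstab g₀)
  obtain ⟨a, b, c, d, M⟩ :=
    exists_isLatticeMatrix hbasis (linearIndependent_single_pair hα hβ) hstab
  have h₁ : (ρ g₀ : Matrix (Fin 2) (Fin 2) K) *ᵥ Pi.single 0 α = lam₁ • Pi.single 0 α := by
    rw [hdiag, diagonal_mulVec_single, ← Pi.single_smul, Algebra.smul_def]; rfl
  have h₂ : (ρ g₀ : Matrix (Fin 2) (Fin 2) K) *ᵥ Pi.single 1 β = lam₂ • Pi.single 1 β := by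
    rw [hdiag, diagonal_mulVec_single, ← Pi.single_smul, Algebra.smul_def]; rfl
  refine ⟨?_, fun ψ₁ ψ₂ => ne_of_trace_eq_add htr hdiag hdist⟩
  change reducibilityIdeal A ρ ≤ _ ↔ IsReducibleModulo ρ T _
  rw [M.reducibilityIdeal_le_iff hα hβ, M.isReducibleModulo_iff h₁ h₂ hdist]

/-- Let `A` be a DVR with uniformizer `ϖ` and residue characteristic `≠ 2`,
`ρ : G → GL₂(Frac A)` a representation with a `G`-stable lattice `T`, and `g₀ ∈ G`
diagonalized with eigenvalues in `A` distinct mod `ϖ`.  Then the ideal of reducibility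
`I(ρ)` (generated by the off-diagonal products `b(g)c(g′)`) is contained in `(ϖ)` if and
only if the semisimplification of `T/ϖT` is a direct sum of two characters
`ψ₁ ⊕ ψ₂` — i.e. iff there is a `G`-stable `W` with `ϖT ⊆ W ⊆ T` on which `G` acts by a
character `ψ₁` mod `ϖT` and with `G` acting on `T/W` by a character `ψ₂`; moreover in that
case `ψ₁ ≠ ψ₂`. -/
theorem stmt6 [IsDomain A] [IsDiscreteValuationRing A] [IsFractionRing A K]
    (hchar : (2 : A) ∉ IsLocalRing.maximalIdeal A)
    (ϖ : A) (hϖ : Irreducible ϖ)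
    (ρ : G →* Matrix.GeneralLinearGroup (Fin 2) K)
    (t : G → A)
    (htr : ∀ g : G, algebraMap A K (t g) = Matrix.trace ((ρ g : Matrix (Fin 2) (Fin 2) K)))
    (T : Submodule A (Fin 2 → K)) (hT : IsStableLattice ρ T)
    (g₀ : G) (lam₁ lam₂ : A)
    (hdiag : (ρ g₀ : Matrix (Fin 2) (Fin 2) K)
      = Matrix.diagonal ![algebraMap A K lam₁, algebraMap A K lam₂])
    (hdist : lam₁ - lam₂ ∉ Ideal.span {ϖ}) :
    (Ideal.span {r : A | ∃ g g' : G,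
        algebraMap A K r = (ρ g : Matrix (Fin 2) (Fin 2) K) 0 1
          * (ρ g' : Matrix (Fin 2) (Fin 2) K) 1 0} ≤ Ideal.span {ϖ}
      ↔ ∃ (ψ₁ ψ₂ : G →* (A ⧸ Ideal.span {ϖ})ˣ) (s₁ s₂ : G → A) (W : Submodule A (Fin 2 → K)),
          (∀ g, Ideal.Quotient.mk (Ideal.span {ϖ}) (s₁ g) = ψ₁ g) ∧
          (∀ g, Ideal.Quotient.mk (Ideal.span {ϖ}) (s₂ g) = ψ₂ g) ∧
          Ideal.span {ϖ} • T ≤ W ∧ W ≤ T ∧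
          (∀ g : G, ∀ v ∈ W, ((ρ g : Matrix (Fin 2) (Fin 2) K).mulVec v) ∈ W) ∧
          (∀ g : G, ∀ v ∈ W,
            ((ρ g : Matrix (Fin 2) (Fin 2) K).mulVec v) - algebraMap A K (s₁ g) • v
              ∈ Ideal.span {ϖ} • T) ∧
          (∀ g : G, ∀ v ∈ T,
            ((ρ g : Matrix (Fin 2) (Fin 2) K).mulVec v) - algebraMap A K (s₂ g) • v ∈ W)) ∧
    (∀ (ψ₁ ψ₂ : G →* (A ⧸ Ideal.span {ϖ})ˣ),
      (∀ g : G, Ideal.Quotient.mk (Ideal.span {ϖ}) (t g) = (ψ₁ g : A ⧸ Ideal.span {ϖ}) + ψ₂ g) →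
      ψ₁ ≠ ψ₂) :=
  stmt6_general ϖ hϖ ρ t htr T hT g₀ lam₁ lam₂ hdiag hdist
end

section
/- Let A be a discrete valuation ring with completion Â (with respect to a uniformizer ϖ), K = Frac(A), K̂ = Frac(Â), and V a finite-dimensional K-vector space. Then the functors T ↦ T ⊗_A Â and T̂ ↦ T̂ ∩ V define mutually inverse bijections between the set of A-lattices of V and the set of Â-lattices of V ⊗_K K̂. -/
/-!
Write `c Rᵈ` (`stdLattice R (Fin d) c`) for the vectors of `Fᵈ` with all coordinates in `R c`.
Since `K = A[1/ϖ]`, every `A`-lattice `T` is sandwiched as `ϖᴹ Aᵈ ⊆ T ⊆ ϖ⁻ᴺ Aᵈ`. Completeness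
makes every element of `Â` outside `(ϖ)` a unit, so every nonzero element of `Â` is a unit times
a power of `ϖ`: hence `K̂ = Â[1/ϖ]`, the same sandwich holds for `Â`-lattices, and `Â ∩ K = A`
inside `K̂`. By density of `A` in `Â`, an element of `T ⊗ Â` (resp. of an `Â`-lattice
`T̂ ⊆ ϖ⁻ᴺ Âᵈ`) agrees modulo `ϖᴹ Âᵈ` with the image of an element of `T` (resp. of `ϖ⁻ᴺ Aᵈ`),
and `Â ∩ K = A` turns these approximations into `(T ⊗ Â) ∩ V = T` and `(T̂ ∩ V) ⊗ Â = T̂`.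
-/

noncomputable section

variable {A : Type*} [CommRing A] [IsDomain A] [IsDiscreteValuationRing A]
  {Ah : Type*} [CommRing Ah] [IsDomain Ah] [Algebra A Ah]
  {K : Type*} [Field K] [Algebra A K] [IsFractionRing A K]
  {Kh : Type*} [Field Kh] [Algebra Ah Kh] [IsFractionRing Ah Kh]
  [Algebra A Kh] [IsScalarTower A Ah Kh] [Algebra K Kh] [IsScalarTower A K Kh]
  {d : ℕ}

/-- The canonical `A`-linear embedding `V = Kᵈ → V ⊗_K K̂ = K̂ᵈ`. -/
def emb : (Fin d → K) →ₗ[A] (Fin d → Kh) where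
  toFun v := fun i => algebraMap K Kh (v i)
  map_add' v w := by funext i; simp
  map_smul' a v := by
    funext i
    simp [Algebra.smul_def, ← IsScalarTower.algebraMap_apply]

/-- An `R`-lattice of `Fᵈ`: a finitely generated `R`-submodule spanning `Fᵈ` over `F`. -/
def IsLatticeOf (R F : Type*) [CommRing R] [Field F] [Algebra R F]
    (d : ℕ) (T : Submodule R (Fin d → F)) : Prop :=
  T.FG ∧ Submodule.span F (T : Set (Fin d → F)) = ⊤

section StdLattice

open Submodule

variable (R : Type*) {F : Type*} (ι : Type*) [CommRing R] [Field F] [Algebra R F]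

def stdLattice (c : F) : Submodule R (ι → F) := pi Set.univ fun _ => R ∙ c

variable {R ι} {c : F}

theorem mem_stdLattice {x : ι → F} :
    x ∈ stdLattice R ι c ↔ ∀ i, ∃ r : R, r • c = x i := by
  simp [stdLattice, mem_pi, mem_span_singleton]

theorem smul_mem_stdLattice {x : ι → F} (a : F) (hx : x ∈ stdLattice R ι c) :
    a • x ∈ stdLattice R ι (a * c) := by
  rw [mem_stdLattice] at hx ⊢
  intro i
  obtain ⟨r, hr⟩ := hx i
  exact ⟨r, by rw [Pi.smul_apply, ← hr, smul_eq_mul, mul_smul_comm]⟩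

variable [Finite ι] [DecidableEq ι]

theorem stdLattice_eq_span : stdLattice R ι c = span R (Set.range fun i => Pi.single i c) := by
  simp_rw [stdLattice, ← iSup_map_single, span_range_eq_iSup, map_span, Set.image_singleton]
  rfl

theorem stdLattice_fg : (stdLattice R ι c).FG :=
  stdLattice_eq_span (R := R) (ι := ι) (c := c) ▸ fg_span (Set.finite_range _)

theorem stdLattice_le_iff {U : Submodule R (ι → F)} :
    stdLattice R ι c ≤ U ↔ ∀ i, Pi.single i c ∈ U := by
  rw [stdLattice_eq_span, span_le, Set.range_subset_iff]
  rfl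

theorem span_stdLattice (hc : c ≠ 0) : span F (stdLattice R ι c : Set (ι → F)) = ⊤ := by
  rw [eq_top_iff, ← (Pi.basisFun F ι).span_eq, span_le]
  rintro _ ⟨i, rfl⟩
  have hsingle : Pi.single i c ∈ stdLattice R ι c := stdLattice_le_iff.mp le_rfl i
  rw [Pi.basisFun_apply, show (Pi.single i 1 : ι → F) = c⁻¹ • Pi.single i c by
    rw [← Pi.single_smul', smul_eq_mul, inv_mul_cancel₀ hc]]
  exact smul_mem _ _ (subset_span hsingle)

end StdLattice

section ClearDenominators

open Submodule

variable {R : Type*} [CommRing R] (π : R)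

theorem pow_smul_mem_of_le {M : Type*} [AddCommGroup M] [Module R M] (U : Submodule R M) {x : M}
    {m n : ℕ} (h : π ^ m • x ∈ U) (hmn : m ≤ n) : π ^ n • x ∈ U := by
  rw [← Nat.sub_add_cancel hmn, pow_add, mul_smul]
  exact U.smul_mem _ h

theorem exists_pow_smul_mem_forall {M ι : Type*} [AddCommGroup M] [Module R M] [Finite ι]
    (U : Submodule R M) {v : ι → M} (h : ∀ i, ∃ n : ℕ, π ^ n • v i ∈ U) :
    ∃ N : ℕ, ∀ i, π ^ N • v i ∈ U := by
  choose n hn using h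
  obtain ⟨N, hN⟩ := Finite.exists_le n
  exact ⟨N, fun i => pow_smul_mem_of_le π U (hn i) (hN i)⟩

variable {F : Type*} [Field F] [Algebra R F] {π}
  (hclear : ∀ x : F, ∃ n : ℕ, π ^ n • x ∈ (1 : Submodule R F))
include hclear

theorem exists_pow_smul_mem_of_mem_span {M : Type*} [AddCommGroup M] [Module F M] [Module R M]
    [IsScalarTower R F M] {U : Submodule R M} {x : M} (hx : x ∈ span F (U : Set M)) :
    ∃ n : ℕ, π ^ n • x ∈ U := by
  induction hx using span_induction with
  | mem x hx => exact ⟨0, by simpa using hx⟩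
  | zero => exact ⟨0, by simp⟩
  | add x y _ _ hx hy =>
    obtain ⟨m, hm⟩ := hx
    obtain ⟨n, hn⟩ := hy
    refine ⟨m + n, ?_⟩
    rw [smul_add]
    exact add_mem (pow_smul_mem_of_le π U hm (Nat.le_add_right m n))
      (pow_smul_mem_of_le π U hn (Nat.le_add_left n m))
  | smul a x _ hx =>
    obtain ⟨n, hn⟩ := hx
    obtain ⟨k, hk⟩ := hclear a
    obtain ⟨r, hr⟩ := mem_one.mp hk
    refine ⟨k + n, ?_⟩
    have hsmul : π ^ (k + n) • a • x = r • π ^ n • x := by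
      rw [← algebraMap_smul F r, hr, pow_add, mul_smul, smul_assoc, smul_comm a]
    rw [hsmul]
    exact U.smul_mem r hn

variable {ι : Type*} [Finite ι]

theorem exists_le_stdLattice_inv_pow (hπ : algebraMap R F π ≠ 0) {U : Submodule R (ι → F)}
    (hU : U.FG) : ∃ N : ℕ, U ≤ stdLattice R ι (algebraMap R F π ^ N)⁻¹ := by
  obtain ⟨S, rfl⟩ := hU
  have hvec (x : ι → F) : ∃ n : ℕ, π ^ n • x ∈ stdLattice R ι (1 : F) := by
    obtain ⟨n, hn⟩ := exists_pow_smul_mem_forall π 1 (v := x) fun i => hclear (x i)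
    exact ⟨n, by simpa [stdLattice, mem_pi, ← one_eq_span] using hn⟩
  obtain ⟨N, hN⟩ := exists_pow_smul_mem_forall π _ (v := fun s : S => (s : ι → F))
    fun s => hvec s
  refine ⟨N, span_le.mpr fun s hs => ?_⟩
  have hs' := smul_mem_stdLattice (algebraMap R F π ^ N)⁻¹ (hN ⟨s, hs⟩)
  rwa [← algebraMap_smul F (π ^ N), map_pow, inv_smul_smul₀ (pow_ne_zero N hπ), mul_one]
    at hs'

variable [DecidableEq ι]

theorem exists_stdLattice_pow_le {U : Submodule R (ι → F)}
    (hU : span F (U : Set (ι → F)) = ⊤) :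
    ∃ M : ℕ, stdLattice R ι (algebraMap R F π ^ M) ≤ U := by
  obtain ⟨M, hM⟩ := exists_pow_smul_mem_forall π U (v := fun i => Pi.single i (1 : F))
    fun i => exists_pow_smul_mem_of_mem_span hclear (hU ▸ mem_top)
  refine ⟨M, stdLattice_le_iff.mpr fun i => ?_⟩
  rw [← map_pow, Algebra.algebraMap_eq_smul_one, Pi.single_smul']
  exact hM i

end ClearDenominators

theorem exists_pow_smul_mem_one_of_dvd_pow {R F : Type*} [CommRing R] [Field F] [Algebra R F]
    [IsFractionRing R F] {π : R} (h : ∀ s ∈ nonZeroDivisors R, ∃ n : ℕ, s ∣ π ^ n)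
    (x : F) :
    ∃ n : ℕ, π ^ n • x ∈ (1 : Submodule R F) := by
  obtain ⟨⟨a, s⟩, hs⟩ := IsLocalization.surj (nonZeroDivisors R) x
  obtain ⟨n, t, ht⟩ := h s s.2
  refine ⟨n, Submodule.mem_one.mpr ⟨t * a, ?_⟩⟩
  rw [Algebra.smul_def, ht, map_mul, map_mul, ← hs]
  ring

namespace IsDiscreteValuationRing

variable {R : Type*} [CommRing R] [IsDomain R] [IsDiscreteValuationRing R] {ϖ : R}

theorem isUnit_of_not_dvd (hϖ : Irreducible ϖ) {a : R} (h : ¬ϖ ∣ a) : IsUnit a := by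
  by_contra ha
  have ha' := (IsLocalRing.mem_maximalIdeal a).mpr ha
  rw [hϖ.maximalIdeal_eq, Ideal.mem_span_singleton] at ha'
  exact h ha'

theorem exists_pow_smul_mem_one {F : Type*} [Field F] [Algebra R F] [IsFractionRing R F]
    (hϖ : Irreducible ϖ) (x : F) : ∃ n : ℕ, ϖ ^ n • x ∈ (1 : Submodule R F) :=
  exists_pow_smul_mem_one_of_dvd_pow (fun _ hs =>
    (associated_pow_irreducible (nonZeroDivisors.ne_zero hs) hϖ).imp fun _ h => h.dvd) x

end IsDiscreteValuationRing

section AdicCompletion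

variable {R S : Type*} [CommRing R] [CommRing S] [Algebra R S]

theorem not_isUnit_of_isHausdorff [Nontrivial S] {x : S} (h : IsHausdorff (Ideal.span {x}) S) :
    ¬IsUnit x := by
  intro hx
  rw [Ideal.span_singleton_eq_top.mpr hx] at h
  exact not_subsingleton S h.subsingleton

theorem isUnit_of_notMem_span [IsDomain R] [IsDiscreteValuationRing R] {ϖ : R}
    (hϖ : Irreducible ϖ) (hcomplete : IsAdicComplete (Ideal.span {algebraMap R S ϖ}) S)
    (hdense : ∀ b : S, ∃ a : R, b - algebraMap R S a ∈ Ideal.span {algebraMap R S ϖ})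
    {c : S} (hc : c ∉ Ideal.span {algebraMap R S ϖ}) : IsUnit c := by
  obtain ⟨a, ha⟩ := hdense c
  have ha_not_dvd : ¬ϖ ∣ a := by
    rintro ⟨t, rfl⟩
    refine hc (by simpa using add_mem ha (Ideal.mul_mem_right (algebraMap R S t) _
      (Ideal.mem_span_singleton_self _)))
  obtain ⟨u, hu⟩ :=
    (IsDiscreteValuationRing.isUnit_of_not_dvd hϖ ha_not_dvd).map (algebraMap R S)
  have hj : c - algebraMap R S a ∈ (⊥ : Ideal S).jacobson :=
    haveI := hcomplete
    IsAdicComplete.le_jacobson_bot _ ha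
  have hinv : (u : S) * ↑u⁻¹ = 1 := u.mul_inv
  have hc_eq : c = u * ((c - algebraMap R S a) * ↑u⁻¹ + 1) := by
    rw [← hu]
    linear_combination (↑u - c) * hinv
  rw [hc_eq]
  exact u.isUnit.mul (Ideal.mem_jacobson_bot.mp hj _)

theorem exists_associated_pow_of_isHausdorff {x : S} (hH : IsHausdorff (Ideal.span {x}) S)
    (hunit : ∀ c ∉ Ideal.span {x}, IsUnit c) {b : S} (hb : b ≠ 0) :
    ∃ n : ℕ, Associated b (x ^ n) := by
  obtain ⟨m, hm⟩ : ∃ m, b ∉ Ideal.span {x} ^ m := by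
    by_contra! h
    exact hb (hH.haus b fun n => by simpa [SModEq.zero] using h n)
  induction m generalizing b with
  | zero => simp at hm
  | succ m ih =>
    by_cases hbx : b ∈ Ideal.span {x}
    · obtain ⟨c, rfl⟩ := Ideal.mem_span_singleton'.mp hbx
      have hc : c ∉ Ideal.span {x} ^ m := fun hc =>
        hm (pow_succ (Ideal.span {x}) m ▸ Ideal.mul_mem_mul hc (Ideal.mem_span_singleton_self x))
      obtain ⟨n, hn⟩ := ih (left_ne_zero_of_mul hb) hc
      exact ⟨n + 1, pow_succ x n ▸ hn.mul_right x⟩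
    · exact ⟨0, by simpa [associated_one_iff_isUnit] using hunit b hbx⟩

end AdicCompletion

section Lattices

open Submodule

variable {ϖ : A}

omit [IsDomain A] [IsDiscreteValuationRing A] [IsFractionRing A K] in
theorem emb_apply (v : Fin d → K) (i : Fin d) :
    emb (A := A) (Kh := Kh) v i = algebraMap K Kh (v i) := rfl

omit [IsDomain A] [IsDiscreteValuationRing A] [IsFractionRing A K] in
theorem emb_single (i : Fin d) (c : K) :
    emb (A := A) (Kh := Kh) (Pi.single i c) = Pi.single i (algebraMap K Kh c) := by
  ext j
  rcases eq_or_ne j i with rfl | h <;> simp [emb_apply, *]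

omit [IsDomain A] [IsDiscreteValuationRing A] [IsFractionRing A K] [IsDomain Ah]
  [IsFractionRing Ah Kh] in
theorem emb_mem_stdLattice {c : K} {x : Fin d → K} (hx : x ∈ stdLattice A (Fin d) c) :
    emb (A := A) x ∈ stdLattice Ah (Fin d) (algebraMap K Kh c) := by
  rw [mem_stdLattice] at hx ⊢
  intro i
  obtain ⟨r, hr⟩ := hx i
  refine ⟨algebraMap A Ah r, ?_⟩
  rw [emb_apply, ← hr, algebraMap_smul, Algebra.smul_def, Algebra.smul_def, map_mul,
    ← IsScalarTower.algebraMap_apply]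

omit [IsDomain Ah] in
theorem exists_algebraMap_eq_of_algebraMap_eq (hϖ : Irreducible ϖ)
    (hnu : ¬IsUnit (algebraMap A Ah ϖ)) {k : K} {b : Ah}
    (h : algebraMap K Kh k = algebraMap Ah Kh b) : ∃ a : A, algebraMap A K a = k := by
  obtain ⟨n, hn⟩ := IsDiscreteValuationRing.exists_pow_smul_mem_one hϖ k
  have hϖK : algebraMap A K ϖ ≠ 0 :=
    (map_ne_zero_iff _ (IsFractionRing.injective A K)).mpr hϖ.ne_zero
  induction n with
  | zero => simpa [mem_one] using hn
  | succ n ih =>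
    obtain ⟨a, ha⟩ := mem_one.mp hn
    by_cases hdvd : ϖ ∣ a
    · obtain ⟨a', rfl⟩ := hdvd
      refine ih (mem_one.mpr ⟨a', mul_left_cancel₀ hϖK ?_⟩)
      rw [← map_mul, ha, pow_succ', mul_smul, Algebra.smul_def ϖ]
    · -- `a` is a unit of `A`, yet its image in `Â` is divisible by `ϖ`
      have hb : algebraMap A Ah a = algebraMap A Ah ϖ ^ (n + 1) * b := by
        apply IsFractionRing.injective Ah Kh
        rw [map_mul, map_pow, ← IsScalarTower.algebraMap_apply,
          ← IsScalarTower.algebraMap_apply, IsScalarTower.algebraMap_apply A K Kh a, ha,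
          Algebra.smul_def, map_mul, h, ← IsScalarTower.algebraMap_apply, map_pow]
      exact absurd (isUnit_of_dvd_unit (hb ▸ (dvd_pow_self _ n.succ_ne_zero).mul_right b)
        ((IsDiscreteValuationRing.isUnit_of_not_dvd hϖ hdvd).map (algebraMap A Ah))) hnu

omit [IsDomain Ah] in
theorem emb_mem_stdLattice_iff (hϖ : Irreducible ϖ) (hnu : ¬IsUnit (algebraMap A Ah ϖ))
    {c : K} (hc : c ≠ 0) {x : Fin d → K} :
    emb (A := A) x ∈ stdLattice Ah (Fin d) (algebraMap K Kh c) ↔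
      x ∈ stdLattice A (Fin d) c := by
  refine ⟨fun hx => mem_stdLattice.mpr fun i => ?_, emb_mem_stdLattice⟩
  obtain ⟨b, hb⟩ := mem_stdLattice.mp hx i
  obtain ⟨a, ha⟩ := exists_algebraMap_eq_of_algebraMap_eq (Kh := Kh) hϖ hnu
    (k := x i / c) (b := b) (by
      rw [map_div₀, ← emb_apply (A := A), ← hb, Algebra.smul_def,
        mul_div_cancel_right₀ _ ((map_ne_zero _).mpr hc)])
  exact ⟨a, by rw [Algebra.smul_def, ha, div_mul_cancel₀ _ hc]⟩

omit [IsDomain A] [IsDiscreteValuationRing A] [IsFractionRing A K] [IsDomain Ah] [Algebra A Ah]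
  [IsFractionRing Ah Kh] [IsScalarTower A Ah Kh] in
theorem stdLattice_le_span_emb_image {c : K} {T : Submodule A (Fin d → K)}
    (h : stdLattice A (Fin d) c ≤ T) :
    stdLattice Ah (Fin d) (algebraMap K Kh c) ≤
      span Ah (emb (A := A) '' (T : Set (Fin d → K))) :=
  stdLattice_le_iff.mpr fun i => subset_span
    ⟨Pi.single i c, h (stdLattice_le_iff.mp le_rfl i), emb_single i c⟩

omit [IsDomain A] [IsDiscreteValuationRing A] [IsDomain Ah] [IsFractionRing Ah Kh] in
theorem exists_sub_mem_stdLattice_of_mem_span (hϖ : ϖ ≠ 0)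
    (hdense : ∀ (j : ℕ) (b : Ah), ∃ a : A,
      b - algebraMap A Ah a ∈ (Ideal.span {algebraMap A Ah ϖ}) ^ j)
    {T : Submodule A (Fin d → K)} {N : ℕ}
    (hT : T ≤ stdLattice A (Fin d) (algebraMap A K ϖ ^ N)⁻¹) (M : ℕ) {x : Fin d → Kh}
    (hx : x ∈ span Ah (emb (A := A) '' (T : Set (Fin d → K)))) :
    ∃ t ∈ T,
      x - emb (A := A) t ∈ stdLattice Ah (Fin d) (algebraMap K Kh (algebraMap A K ϖ ^ M)) := by
  induction hx using span_induction with
  | mem x hx =>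
    obtain ⟨t, ht, rfl⟩ := hx
    exact ⟨t, ht, by simp⟩
  | zero => exact ⟨0, zero_mem _, by simp⟩
  | add x y _ _ hx hy =>
    obtain ⟨t, ht, hxt⟩ := hx
    obtain ⟨u, hu, hyu⟩ := hy
    exact ⟨t + u, add_mem ht hu, by rw [map_add, add_sub_add_comm]; exact add_mem hxt hyu⟩
  | smul b x _ hx =>
    -- approximate `b` by `a : A` modulo `ϖ ^ (N + M)`; the error term is small since
    -- `ϖ ^ (N + M)` carries `emb t ∈ ϖ⁻ᴺ Âᵈ` into `ϖᴹ Âᵈ`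
    obtain ⟨t, ht, hxt⟩ := hx
    obtain ⟨a, ha⟩ := hdense (N + M) b
    rw [Ideal.span_singleton_pow, Ideal.mem_span_singleton'] at ha
    obtain ⟨c, hc⟩ := ha
    refine ⟨a • t, T.smul_mem a ht, ?_⟩
    have hsplit : b • x - emb (A := A) (a • t) =
        b • (x - emb (A := A) t) + c • algebraMap A Ah ϖ ^ (N + M) • emb (A := A) t := by
      rw [smul_smul, hc, sub_smul, map_smul, algebraMap_smul, smul_sub]
      abel
    rw [hsplit]
    refine add_mem (smul_mem _ _ hxt) (smul_mem _ _ ?_)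
    have hsmall := smul_mem_stdLattice (algebraMap K Kh (algebraMap A K ϖ ^ (N + M)))
      (emb_mem_stdLattice (Ah := Ah) (hT ht))
    convert hsmall using 2
    · rw [← map_mul]
      congr 1
      rw [pow_add, ← div_eq_mul_inv, mul_div_cancel_left₀ _
        (pow_ne_zero N ((map_ne_zero_iff _ (IsFractionRing.injective A K)).mpr hϖ))]
    · rw [← map_pow, algebraMap_smul, ← map_pow, ← IsScalarTower.algebraMap_apply,
        algebraMap_smul]

omit [IsDomain Ah] in
theorem isLatticeOf_span_emb_image (hϖ : Irreducible ϖ) (hnu : ¬IsUnit (algebraMap A Ah ϖ))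
    (hdense : ∀ (j : ℕ) (b : Ah), ∃ a : A,
      b - algebraMap A Ah a ∈ (Ideal.span {algebraMap A Ah ϖ}) ^ j)
    {T : Submodule A (Fin d → K)} (hT : IsLatticeOf A K d T) :
    IsLatticeOf Ah Kh d (span Ah (emb (A := A) '' (T : Set (Fin d → K)))) ∧
      comap (emb (A := A) (Kh := Kh))
        ((span Ah (emb (A := A) '' (T : Set (Fin d → K)))).restrictScalars A) = T := by
  obtain ⟨hfg, hspan⟩ := hT
  have hϖK : algebraMap A K ϖ ≠ 0 :=
    (map_ne_zero_iff _ (IsFractionRing.injective A K)).mpr hϖ.ne_zero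
  have hclear := IsDiscreteValuationRing.exists_pow_smul_mem_one (F := K) hϖ
  obtain ⟨M, hM⟩ := exists_stdLattice_pow_le hclear hspan
  obtain ⟨N, hN⟩ := exists_le_stdLattice_inv_pow hclear hϖK hfg
  have hMh := stdLattice_le_span_emb_image (Ah := Ah) (Kh := Kh) hM
  refine ⟨⟨map_coe (emb (Kh := Kh)) T ▸ (hfg.map _).span, top_unique ?_⟩,
    le_antisymm (fun v hv => ?_) fun t ht => subset_span ⟨t, ht, rfl⟩⟩
  · exact (span_stdLattice ((map_ne_zero _).mpr (pow_ne_zero M hϖK))).ge.trans (span_mono hMh)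
  · obtain ⟨t, ht, hvt⟩ := exists_sub_mem_stdLattice_of_mem_span hϖ.ne_zero hdense hN M hv
    rw [← map_sub, emb_mem_stdLattice_iff hϖ hnu (pow_ne_zero M hϖK)] at hvt
    simpa using add_mem ht (hM hvt)

omit [IsDomain Ah] in
theorem isLatticeOf_comap_emb (hϖ : Irreducible ϖ) (hnu : ¬IsUnit (algebraMap A Ah ϖ))
    (hclear : ∀ x : Kh, ∃ n : ℕ, algebraMap A Ah ϖ ^ n • x ∈ (1 : Submodule Ah Kh))
    (hdense : ∀ (j : ℕ) (b : Ah), ∃ a : A,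
      b - algebraMap A Ah a ∈ (Ideal.span {algebraMap A Ah ϖ}) ^ j)
    {Th : Submodule Ah (Fin d → Kh)} (hTh : IsLatticeOf Ah Kh d Th) :
    IsLatticeOf A K d (comap (emb (A := A) (Kh := Kh)) (Th.restrictScalars A)) ∧
      span Ah (emb (A := A) ''
        (comap (emb (A := A) (K := K) (Kh := Kh)) (Th.restrictScalars A) : Set (Fin d → K)))
        = Th := by
  obtain ⟨hfg, hspan⟩ := hTh
  have hϖK : algebraMap A K ϖ ≠ 0 :=
    (map_ne_zero_iff _ (IsFractionRing.injective A K)).mpr hϖ.ne_zero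
  have hpow (n : ℕ) : algebraMap Ah Kh (algebraMap A Ah ϖ) ^ n =
      algebraMap K Kh (algebraMap A K ϖ ^ n) := by
    rw [map_pow, ← IsScalarTower.algebraMap_apply, ← IsScalarTower.algebraMap_apply]
  have hϖKh : algebraMap Ah Kh (algebraMap A Ah ϖ) ≠ 0 := by
    rw [← pow_one (algebraMap Ah Kh _), hpow]
    exact (map_ne_zero _).mpr (pow_ne_zero 1 hϖK)
  obtain ⟨M, hM⟩ := exists_stdLattice_pow_le hclear hspan
  obtain ⟨N, hN⟩ := exists_le_stdLattice_inv_pow hclear hϖKh hfg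
  rw [hpow] at hM
  rw [hpow, ← map_inv₀] at hN
  set T := comap (emb (A := A) (K := K) (Kh := Kh)) (Th.restrictScalars A)
  have hMT : stdLattice A (Fin d) (algebraMap A K ϖ ^ M) ≤ T := fun x hx =>
    hM (emb_mem_stdLattice hx)
  have hTN : T ≤ stdLattice A (Fin d) (algebraMap A K ϖ ^ N)⁻¹ := fun x hx =>
    (emb_mem_stdLattice_iff hϖ hnu (inv_ne_zero (pow_ne_zero N hϖK))).mp (hN hx)
  refine ⟨⟨stdLattice_fg.of_le hTN, top_unique ?_⟩, le_antisymm ?_ fun x hx => ?_⟩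
  · exact (span_stdLattice (pow_ne_zero M hϖK)).ge.trans (span_mono hMT)
  · exact span_le.mpr fun _ ⟨t, ht, hte⟩ => hte ▸ ht
  · obtain ⟨s, -, hxs⟩ := exists_sub_mem_stdLattice_of_mem_span hϖ.ne_zero hdense le_rfl M
      (stdLattice_le_span_emb_image le_rfl (hN hx))
    have hsT : s ∈ T := by simpa [T] using sub_mem hx (hM hxs)
    simpa using add_mem (stdLattice_le_span_emb_image hMT hxs) (subset_span ⟨s, hsT, rfl⟩)

end Lattices

theorem stmt9_general (ϖ : A) (hϖ : Irreducible ϖ)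
    (hcomplete : IsAdicComplete (Ideal.span {algebraMap A Ah ϖ}) Ah)
    (hdense : ∀ (j : ℕ) (b : Ah), ∃ a : A,
      b - algebraMap A Ah a ∈ (Ideal.span {algebraMap A Ah ϖ}) ^ j) :
    (∀ T : Submodule A (Fin d → K), IsLatticeOf A K d T →
      IsLatticeOf Ah Kh d (Submodule.span Ah (((emb : (Fin d → K) →ₗ[A] (Fin d → Kh))) '' (T : Set (Fin d → K)))) ∧
      Submodule.comap ((emb : (Fin d → K) →ₗ[A] (Fin d → Kh)))
        ((Submodule.span Ah (((emb : (Fin d → K) →ₗ[A] (Fin d → Kh))) '' (T : Set (Fin d → K)))).restrictScalars A) = T) ∧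
    (∀ Th : Submodule Ah (Fin d → Kh), IsLatticeOf Ah Kh d Th →
      IsLatticeOf A K d (Submodule.comap ((emb : (Fin d → K) →ₗ[A] (Fin d → Kh))) (Th.restrictScalars A)) ∧
      Submodule.span Ah (((emb : (Fin d → K) →ₗ[A] (Fin d → Kh))) ''
        ((Submodule.comap ((emb : (Fin d → K) →ₗ[A] (Fin d → Kh))) (Th.restrictScalars A)) : Set (Fin d → K))) = Th) := by
  have hH := hcomplete.toIsHausdorff
  have hnu := not_isUnit_of_isHausdorff hH
  have hunit (c : Ah) (hc : c ∉ Ideal.span {algebraMap A Ah ϖ}) : IsUnit c :=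
    isUnit_of_notMem_span hϖ hcomplete (fun b => by simpa using hdense 1 b) hc
  have hclear : ∀ x : Kh, ∃ n : ℕ, algebraMap A Ah ϖ ^ n • x ∈ (1 : Submodule Ah Kh) :=
    exists_pow_smul_mem_one_of_dvd_pow fun _ hs =>
      (exists_associated_pow_of_isHausdorff hH hunit (nonZeroDivisors.ne_zero hs)).imp
        fun _ h => h.dvd
  exact ⟨fun _ hT => isLatticeOf_span_emb_image hϖ hnu hdense hT,
    fun _ hTh => isLatticeOf_comap_emb hϖ hnu hclear hdense hTh⟩

/-- Let `A` be a DVR with uniformizer `ϖ`, `Â` its `ϖ`-adic completion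
(encoded by: `A → Â` injective, `Â` is `ϖ`-adically complete, `A` is dense in `Â` and
`A/(ϖ)ʲ ≅ Â/(ϖ)ʲ` for all `j`), `K = Frac A`, `K̂ = Frac Â`, and `V = Kᵈ` a
finite-dimensional `K`-vector space.  Then `T ↦ T ⊗_A Â` (i.e. the `Â`-span of `T` in
`K̂ᵈ`) and `T̂ ↦ T̂ ∩ V` are mutually inverse bijections between the set of `A`-lattices of
`V` and the set of `Â`-lattices of `V ⊗_K K̂`. -/
theorem stmt9 (ϖ : A) (hϖ : Irreducible ϖ)
    (hinj : Function.Injective (algebraMap A Ah))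
    (hcomplete : IsAdicComplete (Ideal.span {algebraMap A Ah ϖ}) Ah)
    (hdense : ∀ (j : ℕ) (b : Ah), ∃ a : A,
      b - algebraMap A Ah a ∈ (Ideal.span {algebraMap A Ah ϖ}) ^ j)
    (hker : ∀ (j : ℕ) (a : A),
      algebraMap A Ah a ∈ (Ideal.span {algebraMap A Ah ϖ}) ^ j → a ∈ (Ideal.span {ϖ}) ^ j) :
    (∀ T : Submodule A (Fin d → K), IsLatticeOf A K d T →
      IsLatticeOf Ah Kh d (Submodule.span Ah (((emb : (Fin d → K) →ₗ[A] (Fin d → Kh))) '' (T : Set (Fin d → K)))) ∧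
      Submodule.comap ((emb : (Fin d → K) →ₗ[A] (Fin d → Kh)))
        ((Submodule.span Ah (((emb : (Fin d → K) →ₗ[A] (Fin d → Kh))) '' (T : Set (Fin d → K)))).restrictScalars A) = T) ∧
    (∀ Th : Submodule Ah (Fin d → Kh), IsLatticeOf Ah Kh d Th →
      IsLatticeOf A K d (Submodule.comap ((emb : (Fin d → K) →ₗ[A] (Fin d → Kh))) (Th.restrictScalars A)) ∧
      Submodule.span Ah (((emb : (Fin d → K) →ₗ[A] (Fin d → Kh))) ''
        ((Submodule.comap ((emb : (Fin d → K) →ₗ[A] (Fin d → Kh))) (Th.restrictScalars A)) : Set (Fin d → K))) = Th) :=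
  stmt9_general ϖ hϖ hcomplete hdense
end
end

section
/- Let R be a local domain with maximal ideal m and residue characteristic ≠ 2, ρ : G → GL₂(Frac R) with traces in R, and g₀ ∈ G with eigenvalues in R distinct mod m. For any prime ideal p of R, the ideal of reducibility of the localization R_p corresponding to ρ (viewed over Frac(R_p) = Frac(R)) equals I(ρ)·R_p, where I(ρ) is the ideal of reducibility of R. -/
/-- Let `R` be a local domain with maximal ideal `m`, residue
characteristic `≠ 2`, `ρ : G → GL₂(Frac R)` with traces in `R`, and `g₀ ∈ G` diagonalized
with eigenvalues `λ₁, λ₂ ∈ R` distinct mod `m`.  For any prime `p` of `R`, the ideal of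
reducibility of `R_p` corresponding to `ρ` (generated in `R_p` by the off-diagonal products
`b(g)c(g′)`) equals `I(ρ)·R_p`, where `I(ρ)` is the ideal of reducibility of `R`. -/
theorem stmt11 {R : Type*} [CommRing R] [IsDomain R] [IsLocalRing R]
    (hchar : (2 : R) ∉ IsLocalRing.maximalIdeal R)
    {K : Type*} [Field K] [Algebra R K] [IsFractionRing R K]
    {G : Type*} [Group G] (ρ : G →* Matrix.GeneralLinearGroup (Fin 2) K)
    (htr : ∀ g : G, Matrix.trace ((ρ g : Matrix (Fin 2) (Fin 2) K)) ∈ (algebraMap R K).range)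
    (g₀ : G) (lam₁ lam₂ : R)
    (hdiag : (ρ g₀ : Matrix (Fin 2) (Fin 2) K)
      = Matrix.diagonal ![algebraMap R K lam₁, algebraMap R K lam₂])
    (hdist : lam₁ - lam₂ ∉ IsLocalRing.maximalIdeal R)
    (p : Ideal R) [p.IsPrime]
    [Algebra (Localization.AtPrime p) K] [IsScalarTower R (Localization.AtPrime p) K] :
    Ideal.span {x : Localization.AtPrime p | ∃ g g' : G,
        algebraMap (Localization.AtPrime p) K x
          = (ρ g : Matrix (Fin 2) (Fin 2) K) 0 1 * (ρ g' : Matrix (Fin 2) (Fin 2) K) 1 0}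
      = Ideal.map (algebraMap R (Localization.AtPrime p))
          (Ideal.span {r : R | ∃ g g' : G,
            algebraMap R K r
              = (ρ g : Matrix (Fin 2) (Fin 2) K) 0 1 * (ρ g' : Matrix (Fin 2) (Fin 2) K) 1 0}) := by
  set θ := algebraMap R K with hθ
  set S := θ.range with hS
  -- division by the unit lam₁ - lam₂
  have hunit : IsUnit (lam₁ - lam₂) := by
    simpa [IsLocalRing.mem_maximalIdeal, mem_nonunits_iff] using hdist
  obtain ⟨u, hu⟩ := hunit
  have hdiv : ∀ x : K, θ (lam₁ - lam₂) * x ∈ S → x ∈ S := by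
    rintro x ⟨r, hr⟩
    refine ⟨(↑u⁻¹ : R) * r, ?_⟩
    have h1 : θ ((↑u⁻¹ : R) * (lam₁ - lam₂)) = 1 := by
      rw [← hu, Units.inv_mul, map_one]
    calc θ ((↑u⁻¹ : R) * r) = θ (↑u⁻¹) * θ r := map_mul _ _ _
      _ = θ (↑u⁻¹) * (θ (lam₁ - lam₂) * x) := by rw [hr]
      _ = θ ((↑u⁻¹ : R) * (lam₁ - lam₂)) * x := by rw [map_mul]; ring
      _ = x := by rw [h1, one_mul]
  have hA : ∀ g h : G, (ρ (g * h) : Matrix (Fin 2) (Fin 2) K)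
      = (ρ g : Matrix (Fin 2) (Fin 2) K) * (ρ h : Matrix (Fin 2) (Fin 2) K) := by
    intro g h; rw [map_mul]; rfl
  -- diagonal entries are in S
  have hE : ∀ g : G, (ρ g : Matrix (Fin 2) (Fin 2) K) 0 0 ∈ S
      ∧ (ρ g : Matrix (Fin 2) (Fin 2) K) 1 1 ∈ S := by
    intro g
    set a := (ρ g : Matrix (Fin 2) (Fin 2) K) 0 0
    set d := (ρ g : Matrix (Fin 2) (Fin 2) K) 1 1
    have t1 : a + d ∈ S := by
      have := htr g
      rwa [Matrix.trace_fin_two] at this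
    have t2 : θ lam₁ * a + θ lam₂ * d ∈ S := by
      have := htr (g₀ * g)
      rw [hA, hdiag] at this
      simpa [Matrix.trace_fin_two, Matrix.mul_apply, Fin.sum_univ_two] using this
    constructor
    · apply hdiv
      have : θ (lam₁ - lam₂) * a = (θ lam₁ * a + θ lam₂ * d) - θ lam₂ * (a + d) := by
        rw [map_sub]; ring
      rw [this]
      exact sub_mem t2 (mul_mem ⟨lam₂, rfl⟩ t1)
    · apply hdiv
      have : θ (lam₁ - lam₂) * d = θ lam₁ * (a + d) - (θ lam₁ * a + θ lam₂ * d) := by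
        rw [map_sub]; ring
      rw [this]
      exact sub_mem (mul_mem ⟨lam₁, rfl⟩ t1) t2
  -- products of off-diagonal entries are in S
  have hbc : ∀ g g' : G, (ρ g : Matrix (Fin 2) (Fin 2) K) 0 1
      * (ρ g' : Matrix (Fin 2) (Fin 2) K) 1 0 ∈ S := by
    intro g g'
    set a := (ρ g : Matrix (Fin 2) (Fin 2) K) 0 0
    set b := (ρ g : Matrix (Fin 2) (Fin 2) K) 0 1
    set c := (ρ g : Matrix (Fin 2) (Fin 2) K) 1 0
    set d := (ρ g : Matrix (Fin 2) (Fin 2) K) 1 1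
    set a' := (ρ g' : Matrix (Fin 2) (Fin 2) K) 0 0
    set b' := (ρ g' : Matrix (Fin 2) (Fin 2) K) 0 1
    set c' := (ρ g' : Matrix (Fin 2) (Fin 2) K) 1 0
    set d' := (ρ g' : Matrix (Fin 2) (Fin 2) K) 1 1
    have t1 : a * a' + b * c' + c * b' + d * d' ∈ S := by
      have := htr (g * g')
      rw [hA] at this
      have e : Matrix.trace ((ρ g : Matrix (Fin 2) (Fin 2) K) * (ρ g' : Matrix (Fin 2) (Fin 2) K))
          = a * a' + b * c' + c * b' + d * d' := by
        simp [Matrix.trace_fin_two, Matrix.mul_apply, Fin.sum_univ_two]; ring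
      rwa [e] at this
    have t2 : θ lam₁ * (a * a') + θ lam₂ * (b * c') + θ lam₁ * (c * b')
        + θ lam₂ * (d * d') ∈ S := by
      have := htr (g * (g₀ * g'))
      rw [hA, hA, hdiag] at this
      have e : Matrix.trace ((ρ g : Matrix (Fin 2) (Fin 2) K)
            * (Matrix.diagonal ![θ lam₁, θ lam₂] * (ρ g' : Matrix (Fin 2) (Fin 2) K)))
          = θ lam₁ * (a * a') + θ lam₂ * (b * c') + θ lam₁ * (c * b') + θ lam₂ * (d * d') := by
        simp [Matrix.trace_fin_two, Matrix.mul_apply, Fin.sum_univ_two]; ring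
      rwa [e] at this
    apply hdiv
    have : θ (lam₁ - lam₂) * (b * c')
        = θ lam₁ * (a * a' + b * c' + c * b' + d * d')
          - (θ lam₁ * (a * a') + θ lam₂ * (b * c') + θ lam₁ * (c * b') + θ lam₂ * (d * d'))
          - θ (lam₁ - lam₂) * (d * d') := by
      rw [map_sub]; ring
    rw [this]
    exact sub_mem (sub_mem (mul_mem ⟨lam₁, rfl⟩ t1) t2)
      (mul_mem ⟨lam₁ - lam₂, rfl⟩ (mul_mem (hE g).2 (hE g').2))
  -- the localization injects into K
  haveI : IsFractionRing (Localization.AtPrime p) K :=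
    IsFractionRing.isFractionRing_of_isDomain_of_isLocalization p.primeCompl
      (Localization.AtPrime p) K
  have hinj : Function.Injective (algebraMap (Localization.AtPrime p) K) :=
    IsFractionRing.injective _ _
  rw [Ideal.map_span]
  apply le_antisymm
  · rw [Ideal.span_le]
    rintro x ⟨g, g', hx⟩
    obtain ⟨r, hr⟩ := hbc g g'
    have hxr : x = algebraMap R (Localization.AtPrime p) r := by
      apply hinj
      rw [hx, ← hr, hθ, IsScalarTower.algebraMap_apply R (Localization.AtPrime p) K]
    rw [hxr]
    exact Ideal.subset_span ⟨r, ⟨g, g', hr⟩, rfl⟩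
  · rw [Ideal.span_le]
    rintro y ⟨r, ⟨g, g', hr⟩, rfl⟩
    refine Ideal.subset_span ⟨g, g', ?_⟩
    rw [← IsScalarTower.algebraMap_apply R (Localization.AtPrime p) K, ← hθ, hr]
end

section
/- Let I be a Noetherian integrally closed local domain, G a group, and T′ ⊂ T two G-stable I-lattices in a 2-dimensional representation V over Frac(I), each equipped with a D-stable rank-one free direct filtration F⁺T ⊂ T, F⁺T′ ⊂ T′ (F⁺T′ = F⁺T ∩ T′) such that D acts on F⁺ via a character ε₁ and on F⁻ = T/F⁺T via a character ε₂ with ε₁ ≢ ε₂ modulo the maximal ideal. If T/T′ is a cyclic I-module, then F⁺T = F⁺T′ or F⁻T = F⁻T′ (where F⁻T′ = T′/F⁺T′ maps injectively to F⁻T). -/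
/-- Let `I` be a Noetherian integrally closed local domain with maximal
ideal `m`, `K = Frac(I)`, and `T′ ⊆ T` two `D`-stable `I`-lattices in a `2`-dimensional
`K`-representation `V` of a group `D` (acting through `ρ`), each with a `D`-stable rank-one
free filtration `F⁺T ⊆ T` (and `F⁺T′ = F⁺T ∩ T′`) such that `D` acts on `F⁺` via a
character `ε₁` and on `F⁻ = T/F⁺T` via a character `ε₂`, with `ε₁ ≢ ε₂ (mod m)`.  If
`T/T′` is a cyclic `I`-module then `F⁺T = F⁺T′` or `F⁻T = F⁻T′` (i.e. `T′ ⊔ F⁺T = T`). -/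
theorem stmt18 {I : Type*} [CommRing I] [IsDomain I] [IsNoetherianRing I]
    [IsIntegrallyClosed I] [IsLocalRing I]
    {K : Type*} [Field K] [Algebra I K] [IsFractionRing I K]
    {V : Type*} [AddCommGroup V] [Module K V] [Module I V] [IsScalarTower I K V]
    [FiniteDimensional K V] (hdim : Module.finrank K V = 2)
    {D : Type*} [Group D] (ρ : D →* (V ≃ₗ[K] V))
    (T T' Fp : Submodule I V)
    (hTfg : T.FG) (hTspan : Submodule.span K (T : Set V) = ⊤)
    (hT'fg : T'.FG) (hT'span : Submodule.span K (T' : Set V) = ⊤)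
    (hsub : T' ≤ T) (hFpT : Fp ≤ T)
    (hTstab : ∀ d : D, ∀ v ∈ T, ρ d v ∈ T)
    (hT'stab : ∀ d : D, ∀ v ∈ T', ρ d v ∈ T')
    (hFpfree : ∃ v : V, v ≠ 0 ∧ Fp = Submodule.span I {v})
    (hFmfree : Nonempty ((↥T ⧸ Submodule.comap T.subtype Fp) ≃ₗ[I] I))
    (hFp'free : ∃ v : V, v ≠ 0 ∧ Fp ⊓ T' = Submodule.span I {v})
    (hFm'free : Nonempty ((↥T' ⧸ Submodule.comap T'.subtype (Fp ⊓ T')) ≃ₗ[I] I))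
    (ε₁ ε₂ : D →* Iˣ)
    (hε₁ : ∀ d : D, ∀ v ∈ Fp, ρ d v = algebraMap I K ((ε₁ d : I)) • v)
    (hε₂ : ∀ d : D, ∀ v ∈ T, ρ d v - algebraMap I K ((ε₂ d : I)) • v ∈ Fp)
    (hdist : ∃ d : D, (ε₁ d : I) - (ε₂ d : I) ∉ IsLocalRing.maximalIdeal I)
    (hcyc : ∃ w ∈ T, ∀ u ∈ T, ∃ a : I, u - a • w ∈ T') :
    Fp ⊓ T' = Fp ∨ T' ⊔ Fp = T := by
  classical
  obtain ⟨d, hd⟩ := hdist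
  obtain ⟨w, hwT, hw⟩ := hcyc
  set u : I := (ε₁ d : I) - (ε₂ d : I) with hu
  have hu_unit : IsUnit u := by
    by_contra h
    exact hd ((IsLocalRing.mem_maximalIdeal u).mpr h)
  set φ : V → V := fun v => ρ d v - (ε₂ d : I) • v with hφ
  have hφ_smul : ∀ (a : I) (v : V), φ (a • v) = a • φ v := by
    intro a v
    simp only [hφ]
    rw [← algebraMap_smul K a v, map_smul, algebraMap_smul, smul_sub, smul_comm, algebraMap_smul]
  have hφ_sub : ∀ v₁ v₂ : V, φ (v₁ - v₂) = φ v₁ - φ v₂ := by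
    intro v₁ v₂
    simp only [hφ, map_sub, smul_sub]
    abel
  have hφT' : ∀ v ∈ T', φ v ∈ T' := fun v hv =>
    Submodule.sub_mem _ (hT'stab d v hv) (Submodule.smul_mem _ _ hv)
  have hφFp : ∀ v ∈ T, φ v ∈ Fp := by
    intro v hv
    have h := hε₂ d v hv
    rwa [algebraMap_smul] at h
  have hφeig : ∀ v ∈ Fp, φ v = u • v := by
    intro v hv
    have h1 := hε₁ d v hv
    rw [algebraMap_smul] at h1
    simp only [hφ, h1, hu, sub_smul]
  set x : V := φ w with hx
  have hxFp : x ∈ Fp := hφFp w hwT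
  obtain ⟨a, ha⟩ := hw x (hFpT hxFp)
  -- `(u - a) • x ∈ T'`
  have h2 : (u - a) • x ∈ T' := by
    have h3 := hφT' _ ha
    rw [hφ_sub, hφ_smul, hφeig x hxFp, ← hx, ← sub_smul] at h3
    exact h3
  by_cases hau : IsUnit (u - a)
  · -- then `x ∈ T'`, hence `Fp ≤ T'`
    left
    have hxT' : x ∈ T' := by
      have h4 := Submodule.smul_mem T' ((hau.unit⁻¹ : Iˣ) : I) h2
      rwa [smul_smul, IsUnit.val_inv_mul, one_smul] at h4
    refine inf_eq_left.mpr ?_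
    intro y hy
    -- any `y ∈ Fp` is congruent mod `T'` to a multiple of `x`
    obtain ⟨c₀, hc₀⟩ := hw y (hFpT hy)
    have h5 := hφT' _ hc₀
    rw [hφ_sub, hφ_smul, hφeig y hy, ← hx] at h5
    have h6 := Submodule.smul_mem T' ((hu_unit.unit⁻¹ : Iˣ) : I) h5
    rw [smul_sub, smul_smul, IsUnit.val_inv_mul, one_smul, smul_smul] at h6
    -- `y - (u⁻¹ c₀) • x ∈ T'` and `(u⁻¹ c₀) • x ∈ T'`
    have h7 : (((hu_unit.unit⁻¹ : Iˣ) : I) * c₀) • x ∈ T' := by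
      rw [mul_smul]
      exact Submodule.smul_mem T' _ (Submodule.smul_mem T' _ hxT')
    have h8 := Submodule.add_mem T' h6 h7
    have h9 : y - (((hu_unit.unit⁻¹ : Iˣ) : I) * c₀) • x + (((hu_unit.unit⁻¹ : Iˣ) : I) * c₀) • x = y := by abel
    rwa [h9] at h8
  · -- then `a` is a unit, hence `w ∈ T' ⊔ Fp`, hence `T ≤ T' ⊔ Fp`
    right
    have ha_unit : IsUnit a := by
      by_contra hna
      have hmem : u ∈ nonunits I := by
        rw [show u = (u - a) + a by ring]
        exact IsLocalRing.nonunits_add hau hna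
      exact (mem_nonunits_iff.mp hmem) hu_unit
    have haw : a • w - x ∈ T' := by
      have := Submodule.neg_mem T' ha
      rwa [neg_sub] at this
    have hwsplit : w - ((ha_unit.unit⁻¹ : Iˣ) : I) • x ∈ T' := by
      have h8 := Submodule.smul_mem T' ((ha_unit.unit⁻¹ : Iˣ) : I) haw
      rwa [smul_sub, smul_smul, IsUnit.val_inv_mul, one_smul] at h8
    have hwmem : w ∈ T' ⊔ Fp := by
      have h9 : w = (w - ((ha_unit.unit⁻¹ : Iˣ) : I) • x) +
          ((ha_unit.unit⁻¹ : Iˣ) : I) • x := by abel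
      rw [h9]
      exact Submodule.add_mem _ (Submodule.mem_sup_left hwsplit)
        (Submodule.mem_sup_right (Submodule.smul_mem _ _ hxFp))
    refine le_antisymm (sup_le hsub hFpT) ?_
    intro v hv
    obtain ⟨b, hb⟩ := hw v hv
    have : v = (v - b • w) + b • w := by abel
    rw [this]
    exact Submodule.add_mem _ (Submodule.mem_sup_left hb)
      (Submodule.smul_mem _ _ hwmem)
end
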